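/- arXiv:1209.2218 — 6 statements merged into one kernel-verified Lean document; each statement's English description precedes it below -/
import Mathlib

section
/- For every forest T on n vertices and every real ε ≥ 0, there exists a vertex v such that either (a) T \ {v} can be partitioned into two disjoint subforests T₁, T₂ with |T₁|, |T₂| ≤ (1/2 + ε)n, or (b) T \ {v} can be partitioned into three disjoint subforests T₁, T₂, T₃ with |T₁|, |T₂|, |T₃| ≤ (1/2 − ε)n, where in each case there are no edges between the parts. -/
/-!
Take a centroid `v` of the forest: every component of `T - v` has at most `n/2` vertices. Such a
vertex exists because a vertex minimising the largest component is one: if `T - v` had a component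
`D` with more than `n/2` vertices, the vertex `u` through which `D` is attached to `v` (unique, as
`T` is acyclic) leaves components inside `D \ {u}` or outside `D`, all smaller than `D`.

Now distribute the components of `T - v` among the parts, with threshold `c = (1/2 - ε)n`. A
component larger than `c` forms a part by itself (it has at most `n/2 < n - c` vertices), the rest
forming the other. Otherwise induction on the number of components gives either three parts of
weight at most `c` or two parts of weight more than `c`; in the latter case each part weighs less
than `n - c = (1/2 + ε)n`.
-/

open Finset

namespace Finset

variable {ι : Type*} [DecidableEq ι]

theorem exists_two_lt_or_three_le {M : Type*} [AddCommMonoid M] [LinearOrder M]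
    [IsOrderedAddMonoid M] (s : Finset ι) (w : ι → M) (c : M) (hw₀ : ∀ i ∈ s, 0 ≤ w i)
    (hw : ∀ i ∈ s, w i ≤ c) :
    (∃ A B : Finset ι, Disjoint A B ∧ A ∪ B = s ∧ c < ∑ i ∈ A, w i ∧ c < ∑ i ∈ B, w i) ∨
    (∃ A B C : Finset ι, Disjoint A B ∧ Disjoint A C ∧ Disjoint B C ∧ A ∪ B ∪ C = s ∧
      ∑ i ∈ A, w i ≤ c ∧ ∑ i ∈ B, w i ≤ c ∧ ∑ i ∈ C, w i ≤ c) := by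
  induction s using Finset.induction_on with
  | empty =>
    rcases lt_or_ge c 0 with hc | hc
    · exact Or.inl ⟨∅, ∅, by simp, by simp, by simpa, by simpa⟩
    · exact Or.inr ⟨∅, ∅, ∅, by simp, by simp, by simp, by simp, by simpa, by simpa, by simpa⟩
  | insert i s hi ih =>
    have hwi₀ := hw₀ i (mem_insert_self i s)
    rcases ih (fun j hj => hw₀ j (mem_insert_of_mem hj))
        (fun j hj => hw j (mem_insert_of_mem hj))
      with ⟨A, B, hAB, rfl, hA, hB⟩ | ⟨A, B, C, hAB, hAC, hBC, rfl, hA, hB, hC⟩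
    · simp only [mem_union, not_or] at hi
      refine Or.inl ⟨insert i A, B, disjoint_insert_left.2 ⟨hi.2, hAB⟩, insert_union i A B, ?_,
        hB⟩
      rw [sum_insert hi.1]
      exact hA.trans_le (le_add_of_nonneg_left hwi₀)
    · simp only [mem_union, not_or] at hi
      obtain ⟨⟨hiA, hiB⟩, hiC⟩ := hi
      have hiBC : i ∉ B ∪ C := by simp [hiB, hiC]
      by_cases hAi : w i + ∑ j ∈ A, w j ≤ c
      · refine Or.inr ⟨insert i A, B, C, disjoint_insert_left.2 ⟨hiB, hAB⟩,
          disjoint_insert_left.2 ⟨hiC, hAC⟩, hBC, by rw [insert_union, insert_union], ?_, hB, hC⟩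
        rwa [sum_insert hiA]
      -- `i` does not fit into `A`: merge `B`, `C` if they fit, else split off `insert i A`.
      by_cases hBCc : ∑ j ∈ B ∪ C, w j ≤ c
      · refine Or.inr ⟨A, B ∪ C, {i}, disjoint_union_right.2 ⟨hAB, hAC⟩,
          disjoint_singleton_right.2 hiA, disjoint_singleton_right.2 hiBC, ?_, hA, hBCc, ?_⟩
        · rw [← union_assoc, union_comm, insert_eq]
        · rw [sum_singleton]
          exact hw i (mem_insert_self i _)
      · refine Or.inl ⟨insert i A, B ∪ C,
          disjoint_insert_left.2 ⟨hiBC, disjoint_union_right.2 ⟨hAB, hAC⟩⟩,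
          by rw [insert_union, union_assoc], ?_, not_le.1 hBCc⟩
        rw [sum_insert hiA]
        exact not_le.1 hAi

theorem exists_two_le_or_three_le (s : Finset ι) (w : ι → ℝ) {n c : ℝ}
    (hw₀ : ∀ i ∈ s, 0 ≤ w i) (hw : ∀ i ∈ s, 2 * w i ≤ n) (hs : ∑ i ∈ s, w i ≤ n) :
    (∃ A B : Finset ι, Disjoint A B ∧ A ∪ B = s ∧
      ∑ i ∈ A, w i ≤ n - c ∧ ∑ i ∈ B, w i ≤ n - c) ∨
    (∃ A B C : Finset ι, Disjoint A B ∧ Disjoint A C ∧ Disjoint B C ∧ A ∪ B ∪ C = s ∧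
      ∑ i ∈ A, w i ≤ c ∧ ∑ i ∈ B, w i ≤ c ∧ ∑ i ∈ C, w i ≤ c) := by
  by_cases hbig : ∃ i ∈ s, c < w i
  · obtain ⟨i, hi, hci⟩ := hbig
    refine Or.inl ⟨{i}, s.erase i, disjoint_singleton_left.2 (notMem_erase i s),
      by rw [← insert_eq, insert_erase hi], ?_, ?_⟩
    · linarith [sum_singleton w i, hw i hi]
    · linarith [sum_erase_eq_sub (f := w) hi]
  · push Not at hbig
    refine (exists_two_lt_or_three_le s w c hw₀ hbig).imp_left ?_
    rintro ⟨A, B, hAB, rfl, hA, hB⟩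
    have hsum := sum_union hAB (f := w)
    exact ⟨A, B, hAB, rfl, by linarith, by linarith⟩

end Finset

namespace SimpleGraph

variable {V : Type*} (G : SimpleGraph V)

-- `v` is isolated in `G.deleteIncidenceSet v`; discarding it leaves the components of `G - v`.
def componentUnion (v : V) (A : Set (G.deleteIncidenceSet v).ConnectedComponent) : Set V :=
  {x | x ≠ v ∧ (G.deleteIncidenceSet v).connectedComponentMk x ∈ A}

variable {G} {v : V} {A B : Set (G.deleteIncidenceSet v).ConnectedComponent}

lemma componentUnion_union :
    G.componentUnion v (A ∪ B) = G.componentUnion v A ∪ G.componentUnion v B := by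
  ext x
  simp only [componentUnion, Set.mem_union, Set.mem_ofPred_eq, and_or_left]

lemma componentUnion_univ : G.componentUnion v Set.univ = {v}ᶜ := by
  ext x
  simp [componentUnion]

lemma disjoint_componentUnion (h : Disjoint A B) :
    Disjoint (G.componentUnion v A) (G.componentUnion v B) :=
  Set.disjoint_left.2 fun _ ha hb => Set.disjoint_left.1 h ha.2 hb.2

lemma not_adj_of_mem_componentUnion (h : Disjoint A B) {a b : V}
    (ha : a ∈ G.componentUnion v A) (hb : b ∈ G.componentUnion v B) : ¬ G.Adj a b := by
  intro hab
  have hab' : (G.deleteIncidenceSet v).connectedComponentMk a =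
      (G.deleteIncidenceSet v).connectedComponentMk b :=
    ConnectedComponent.eq.2 (deleteIncidenceSet_adj.2 ⟨hab, ha.1, hb.1⟩).reachable
  exact Set.disjoint_left.1 h ha.2 (hab' ▸ hb.2)

lemma ncard_componentUnion [Finite V] (A : Finset (G.deleteIncidenceSet v).ConnectedComponent) :
    (G.componentUnion v A).ncard = ∑ K ∈ A, (G.componentUnion v {K}).ncard := by
  classical
  induction A using Finset.induction_on with
  | empty => simp [componentUnion]
  | insert K A hK ih =>
    rw [coe_insert, Set.insert_eq, componentUnion_union, Set.ncard_union_eq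
      (disjoint_componentUnion (Set.disjoint_singleton_left.2 hK)), sum_insert hK, ih]

lemma reachable_deleteIncidenceSet_self_iff {y : V} :
    (G.deleteIncidenceSet v).Reachable v y ↔ v = y := by
  refine ⟨fun ⟨p⟩ => ?_, fun h => h ▸ Reachable.refl v⟩
  cases p with
  | nil => rfl
  | cons h _ => exact absurd rfl (deleteIncidenceSet_adj.1 h).2.1

lemma mem_componentUnion_singleton_iff_reachable {K} {x y : V} (hx : x ∈ G.componentUnion v {K}) :
    y ∈ G.componentUnion v {K} ↔ (G.deleteIncidenceSet v).Reachable x y := by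
  obtain ⟨hxv, rfl⟩ := hx
  simp only [componentUnion, Set.mem_singleton_iff, Set.mem_ofPred_eq, ConnectedComponent.eq]
  refine ⟨fun h => h.2.symm, fun h => ⟨?_, h.symm⟩⟩
  rintro rfl
  exact hxv (reachable_deleteIncidenceSet_self_iff.1 h.symm).symm

lemma IsAcyclic.eq_of_adj_of_reachable_deleteIncidenceSet (hG : G.IsAcyclic) {y₁ y₂ : V}
    (h₁ : G.Adj v y₁) (h₂ : G.Adj v y₂) (h : (G.deleteIncidenceSet v).Reachable y₁ y₂) :
    y₁ = y₂ := by
  by_contra hne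
  refine isAcyclic_iff_forall_adj_isBridge.1 hG h₁ ?_
  refine Reachable.trans (Adj.reachable ?_) (h.symm.mono fun a b hab => ?_)
  · exact deleteEdges_adj.2 ⟨h₂, by simp [Ne.symm hne, h₂.ne.symm]⟩
  · obtain ⟨hab, hav, hbv⟩ := deleteIncidenceSet_adj.1 hab
    exact deleteEdges_adj.2 ⟨hab, by simp [hav, hbv]⟩

-- The attachment vertex is the neighbour of `v` in the component, unique as `G` is acyclic.
lemma IsAcyclic.exists_attachment (hG : G.IsAcyclic) {K} {x : V}
    (hx : x ∈ G.componentUnion v {K}) :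
    ∃ u ∈ G.componentUnion v {K}, ∀ a ∈ G.componentUnion v {K}, ∀ b ∉ G.componentUnion v {K},
      G.Adj a b → a = u := by
  have hleave : ∀ a ∈ G.componentUnion v {K}, ∀ b ∉ G.componentUnion v {K},
      G.Adj a b → b = v := by
    intro a ha b hb hab
    by_contra hbv
    exact hb ((mem_componentUnion_singleton_iff_reachable ha).2
      (deleteIncidenceSet_adj.2 ⟨hab, ha.1, hbv⟩).reachable)
  by_cases hy : ∃ y ∈ G.componentUnion v {K}, G.Adj v y
  · obtain ⟨y, hy, hvy⟩ := hy
    refine ⟨y, hy, fun a ha b hb hab => ?_⟩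
    obtain rfl := hleave a ha b hb hab
    exact hG.eq_of_adj_of_reachable_deleteIncidenceSet hab.symm hvy
      ((mem_componentUnion_singleton_iff_reachable ha).1 hy)
  · push Not at hy
    exact ⟨x, hx, fun a ha b hb hab => absurd (hleave a ha b hb hab ▸ hab.symm) (hy a ha)⟩

lemma componentUnion_subset_or_subset_compl {D : Set V} {u : V}
    (hD : ∀ a ∈ D, ∀ b ∉ D, G.Adj a b → a = u)
    (K : (G.deleteIncidenceSet u).ConnectedComponent) :
    G.componentUnion u {K} ⊆ D \ {u} ∨ G.componentUnion u {K} ⊆ Dᶜ := by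
  by_cases h : ∃ y ∈ D, y ∈ G.componentUnion u {K}
  · obtain ⟨y, hyD, hy⟩ := h
    refine Or.inl fun z hz => ⟨?_, hz.1⟩
    obtain ⟨p⟩ := (mem_componentUnion_singleton_iff_reachable hy).1 hz
    by_contra hzD
    obtain ⟨d, -, hd, hd'⟩ := p.exists_boundary_dart D hyD hzD
    obtain ⟨hadj, hne, -⟩ := deleteIncidenceSet_adj.1 d.adj
    exact hne (hD _ hd _ hd' hadj)
  · push Not at h
    exact Or.inr fun z hz hzD => h z hzD hz

variable [Finite V]

lemma IsAcyclic.exists_forall_ncard_componentUnion_lt (hG : G.IsAcyclic) {K}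
    (hK : Nat.card V < 2 * (G.componentUnion v {K}).ncard) :
    ∃ u, ∀ K', (G.componentUnion u {K'}).ncard < (G.componentUnion v {K}).ncard := by
  obtain ⟨x, hx⟩ : (G.componentUnion v {K}).Nonempty :=
    Set.nonempty_of_ncard_ne_zero (by omega)
  obtain ⟨u, hu, hD⟩ := hG.exists_attachment hx
  refine ⟨u, fun K' => ?_⟩
  rcases componentUnion_subset_or_subset_compl hD K' with h | h
  · exact (Set.ncard_le_ncard h).trans_lt (Set.ncard_sdiff_singleton_lt_of_mem hu)
  · have := Set.ncard_le_ncard h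
    have := Set.ncard_add_ncard_compl (G.componentUnion v {K})
    omega

theorem IsAcyclic.exists_centroid [Nonempty V] (hG : G.IsAcyclic) :
    ∃ v, ∀ K, 2 * (G.componentUnion v {K}).ncard ≤ Nat.card V := by
  classical
  have hP : ∃ k, ∃ v : V, ∀ K, (G.componentUnion v {K}).ncard ≤ k :=
    ⟨Nat.card V, Classical.arbitrary V, fun K => Set.ncard_le_card _⟩
  -- `Nat.find hP` is the least size that the largest component of some `G - v` can have.
  obtain ⟨v, hv⟩ := Nat.find_spec hP
  refine ⟨v, fun K => ?_⟩
  by_contra! hK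
  obtain ⟨u, hu⟩ := hG.exists_forall_ncard_componentUnion_lt hK
  have := Nat.find_min' hP ⟨u, fun K' => Nat.le_sub_one_of_lt ((hu K').trans_le (hv K))⟩
  have := hv K
  omega

end SimpleGraph

open SimpleGraph

theorem forest_splitting_general {V : Type*} [Fintype V] [Nonempty V] (G : SimpleGraph V)
    (hforest : G.IsAcyclic) (ε : ℝ) :
    ∃ v : V,
      (∃ T₁ T₂ : Set V,
        Disjoint T₁ T₂ ∧ T₁ ∪ T₂ = ({v}ᶜ : Set V) ∧
        (∀ a ∈ T₁, ∀ b ∈ T₂, ¬ G.Adj a b) ∧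
        (T₁.ncard : ℝ) ≤ (1/2 + ε) * Fintype.card V ∧
        (T₂.ncard : ℝ) ≤ (1/2 + ε) * Fintype.card V) ∨
      (∃ T₁ T₂ T₃ : Set V,
        Disjoint T₁ T₂ ∧ Disjoint T₁ T₃ ∧ Disjoint T₂ T₃ ∧
        T₁ ∪ T₂ ∪ T₃ = ({v}ᶜ : Set V) ∧
        (∀ a ∈ T₁, ∀ b ∈ T₂, ¬ G.Adj a b) ∧
        (∀ a ∈ T₁, ∀ b ∈ T₃, ¬ G.Adj a b) ∧
        (∀ a ∈ T₂, ∀ b ∈ T₃, ¬ G.Adj a b) ∧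
        (T₁.ncard : ℝ) ≤ (1/2 - ε) * Fintype.card V ∧
        (T₂.ncard : ℝ) ≤ (1/2 - ε) * Fintype.card V ∧
        (T₃.ncard : ℝ) ≤ (1/2 - ε) * Fintype.card V) := by
  classical
  obtain ⟨v, hv⟩ := hforest.exists_centroid
  have hsize (A : Finset (G.deleteIncidenceSet v).ConnectedComponent) :
      ((G.componentUnion v A).ncard : ℝ) = ∑ K ∈ A, ((G.componentUnion v {K}).ncard : ℝ) := by
    rw [ncard_componentUnion, Nat.cast_sum]
  have htotal : ∑ K, ((G.componentUnion v {K}).ncard : ℝ) ≤ Fintype.card V := by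
    rw [← hsize, coe_univ, componentUnion_univ, ← Nat.card_eq_fintype_card]
    exact_mod_cast Set.ncard_le_card _
  have hhalf (K) : 2 * ((G.componentUnion v {K}).ncard : ℝ) ≤ Fintype.card V := by
    rw [← Nat.card_eq_fintype_card]
    exact_mod_cast hv K
  rcases univ.exists_two_le_or_three_le _ (c := (1/2 - ε) * Fintype.card V)
    (fun _ _ => Nat.cast_nonneg _) (fun K _ => hhalf K) htotal
    with ⟨A, B, hAB, hU, hA, hB⟩ | ⟨A, B, C, hAB, hAC, hBC, hU, hA, hB, hC⟩
  · refine ⟨v, Or.inl ⟨_, _, disjoint_componentUnion (disjoint_coe.2 hAB), ?_,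
      fun a ha b hb => not_adj_of_mem_componentUnion (disjoint_coe.2 hAB) ha hb, ?_, ?_⟩⟩
    · rw [← componentUnion_union, ← coe_union, hU, coe_univ, componentUnion_univ]
    all_goals rw [hsize]; linarith
  · refine ⟨v, Or.inr ⟨_, _, _, disjoint_componentUnion (disjoint_coe.2 hAB),
      disjoint_componentUnion (disjoint_coe.2 hAC),
      disjoint_componentUnion (disjoint_coe.2 hBC), ?_,
      fun a ha b hb => not_adj_of_mem_componentUnion (disjoint_coe.2 hAB) ha hb,
      fun a ha b hb => not_adj_of_mem_componentUnion (disjoint_coe.2 hAC) ha hb,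
      fun a ha b hb => not_adj_of_mem_componentUnion (disjoint_coe.2 hBC) ha hb, ?_, ?_, ?_⟩⟩
    · rw [← componentUnion_union, ← componentUnion_union, ← coe_union, ← coe_union, hU,
        coe_univ, componentUnion_univ]
    all_goals rw [hsize]; assumption

/-- Splitting Lemma for Forests.  For every forest `T` on `n` vertices and
every real `ε ≥ 0`, there is a vertex `v` such that `T \ {v}` splits either into two
parts of size at most `(1/2 + ε)n` or into three parts of size at most `(1/2 - ε)n`,
with no edges of `T` between distinct parts. -/
theorem forest_splitting {V : Type*} [Fintype V] [Nonempty V] (G : SimpleGraph V)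
    (hforest : G.IsAcyclic) (ε : ℝ) (hε : 0 ≤ ε) :
    ∃ v : V,
      (∃ T₁ T₂ : Set V,
        Disjoint T₁ T₂ ∧ T₁ ∪ T₂ = ({v}ᶜ : Set V) ∧
        (∀ a ∈ T₁, ∀ b ∈ T₂, ¬ G.Adj a b) ∧
        (T₁.ncard : ℝ) ≤ (1/2 + ε) * Fintype.card V ∧
        (T₂.ncard : ℝ) ≤ (1/2 + ε) * Fintype.card V) ∨
      (∃ T₁ T₂ T₃ : Set V,
        Disjoint T₁ T₂ ∧ Disjoint T₁ T₃ ∧ Disjoint T₂ T₃ ∧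
        T₁ ∪ T₂ ∪ T₃ = ({v}ᶜ : Set V) ∧
        (∀ a ∈ T₁, ∀ b ∈ T₂, ¬ G.Adj a b) ∧
        (∀ a ∈ T₁, ∀ b ∈ T₃, ¬ G.Adj a b) ∧
        (∀ a ∈ T₂, ∀ b ∈ T₃, ¬ G.Adj a b) ∧
        (T₁.ncard : ℝ) ≤ (1/2 - ε) * Fintype.card V ∧
        (T₂.ncard : ℝ) ≤ (1/2 - ε) * Fintype.card V ∧
        (T₃.ncard : ℝ) ≤ (1/2 - ε) * Fintype.card V) :=
  forest_splitting_general G hforest ε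
end

section
/- Let F₁, …, F_t be finite sets with pairwise disjoint elements, each of size at most (1/2 − ε)n where 0 ≤ ε ≤ 1/2 and the total size of all F_i is at most n. If there is no partition of the index set [t] into at most 3 blocks such that each block's union has size at most (1/2 − ε)n, then for any partition I₁ ⊎ … ⊎ I_k of [t] with k ≥ 4 minimizing k subject to each union ∪_{j∈I_l} F_j having size at most (1/2 − ε)n, the union of the two smallest blocks has size at most n/2 and strictly more than (1/2 − ε)n. -/
open Finset

/-!
Merging the two smallest blocks of a minimal admissible partition gives a partition with one
block fewer, so by minimality the merged block must exceed `(1/2 - ε) n`. On the other hand, with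
at least four blocks there are two further blocks, each at least as large as either smallest one,
so the two smallest blocks together carry at most half of the total size `≤ n`.
-/

namespace Finset

theorem add_le_sum_sdiff_pair_of_forall_le {ι M : Type*} [DecidableEq ι] [AddCommMonoid M]
    [PartialOrder M] [IsOrderedAddMonoid M] [CanonicallyOrderedAdd M] {s : Finset ι}
    {f : ι → M} {a b : ι} (ha : a ∈ s) (hb : b ∈ s) (hcard : 4 ≤ #s)
    (hle : ∀ j ∈ s, j ≠ a → j ≠ b → f a ≤ f j ∧ f b ≤ f j) :
    f a + f b ≤ ∑ j ∈ s \ {a, b}, f j := by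
  have hrest : 1 < #(s \ {a, b}) := by
    have := card_le_two (a := a) (b := b)
    rw [card_sdiff_of_subset (insert_subset ha (singleton_subset_iff.2 hb))]
    omega
  obtain ⟨c, hc, d, hd, hcd⟩ := one_lt_card.1 hrest
  have hc' : c ∈ s ∧ c ≠ a ∧ c ≠ b := by simpa using hc
  have hd' : d ∈ s ∧ d ≠ a ∧ d ≠ b := by simpa using hd
  calc f a + f b ≤ f c + f d :=
        add_le_add (hle c hc'.1 hc'.2.1 hc'.2.2).1 (hle d hd'.1 hd'.2.1 hd'.2.2).2
    _ = ∑ j ∈ {c, d}, f j := (sum_pair hcd).symm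
    _ ≤ ∑ j ∈ s \ {a, b}, f j :=
        sum_le_sum_of_subset (insert_subset hc (singleton_subset_iff.2 hd))

theorem two_nsmul_add_le_sum_of_forall_le {ι M : Type*} [DecidableEq ι] [AddCommMonoid M]
    [PartialOrder M] [IsOrderedAddMonoid M] [CanonicallyOrderedAdd M] {s : Finset ι}
    {f : ι → M} {a b : ι} (ha : a ∈ s) (hb : b ∈ s) (hab : a ≠ b) (hcard : 4 ≤ #s)
    (hle : ∀ j ∈ s, j ≠ a → j ≠ b → f a ≤ f j ∧ f b ≤ f j) :
    2 • (f a + f b) ≤ ∑ j ∈ s, f j := by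
  rw [← sum_sdiff (insert_subset ha (singleton_subset_iff.2 hb)), sum_pair hab, two_nsmul,
    add_comm]
  exact add_le_add_left (add_le_sum_sdiff_pair_of_forall_le ha hb hcard hle) _

end Finset

namespace Finpartition

section Merge

variable {α : Type*} [DistribLattice α] [OrderBot α] [DecidableEq α] {a b c : α}
  (P : Finpartition a)

@[simps]
def mergeParts (hb : b ∈ P.parts) (hc : c ∈ P.parts) : Finpartition a where
  parts := insert (b ⊔ c) (P.parts \ {b, c})
  supIndep := by
    rw [supIndep_iff_pairwiseDisjoint, coe_insert]
    refine (P.disjoint.subset (by simp)).insert fun d hd hne => ?_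
    simp only [coe_sdiff, Set.mem_sdiff, mem_coe, coe_insert, coe_singleton, Set.mem_insert_iff,
      Set.mem_singleton_iff, not_or] at hd
    exact disjoint_sup_left.2
      ⟨P.disjoint hb hd.1 (Ne.symm hd.2.1), P.disjoint hc hd.1 (Ne.symm hd.2.2)⟩
  sup_parts := by
    refine Eq.trans ?_ P.sup_parts
    conv_rhs => rw [← sdiff_union_of_subset (insert_subset hb (singleton_subset_iff.2 hc))]
    simp [sup_assoc]
  bot_notMem := by
    simp only [mem_insert, mem_sdiff, not_or, not_and_or]
    exact ⟨fun h => P.ne_bot hb (sup_eq_bot_iff.1 h.symm).1, Or.inl P.bot_notMem⟩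

theorem card_parts_mergeParts (hb : b ∈ P.parts) (hc : c ∈ P.parts) (hbc : b ≠ c) :
    #(P.mergeParts hb hc).parts + 1 = #P.parts := by
  have hsub : {b, c} ⊆ P.parts := insert_subset hb (singleton_subset_iff.2 hc)
  have hnew : b ⊔ c ∉ P.parts \ {b, c} := fun hmem => by
    obtain ⟨hmem, hne⟩ := mem_sdiff.1 hmem
    exact P.ne_bot hb <|
      (P.disjoint hmem hb fun h => hne (by simp [h])).eq_bot_of_ge le_sup_left
  have hpair : #{b, c} ≤ #P.parts := card_le_card hsub
  rw [card_pair hbc] at hpair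
  rw [mergeParts_parts, card_insert_of_notMem hnew, card_sdiff_of_subset hsub, card_pair hbc]
  omega

theorem mergeParts_parts_subset (hb : b ∈ P.parts) (hc : c ∈ P.parts) :
    (P.mergeParts hb hc).parts ⊆ insert (b ⊔ c) P.parts :=
  insert_subset_insert _ sdiff_subset

end Merge

theorem sum_sum_parts {α M : Type*} [DecidableEq α] [AddCommMonoid M] {s : Finset α}
    (P : Finpartition s) (f : α → M) : ∑ t ∈ P.parts, ∑ i ∈ t, f i = ∑ i ∈ s, f i := by
  have := sum_biUnion (f := f) P.disjoint
  rw [P.biUnion_parts] at this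
  exact this.symm

end Finpartition

theorem two_smallest_blocks_general {α : Type*} {t n : ℕ} (ε : ℝ)
    (F : Fin t → Finset α)
    (htotal : ((∑ i, (F i).card : ℕ) : ℝ) ≤ n)
    (P : Finpartition (Finset.univ : Finset (Fin t)))
    (hP : ∀ I ∈ P.parts, ((∑ j ∈ I, (F j).card : ℕ) : ℝ) ≤ (1/2 - ε) * n)
    (hk4 : 4 ≤ P.parts.card)
    (hmin : ∀ Q : Finpartition (Finset.univ : Finset (Fin t)),
        (∀ I ∈ Q.parts, ((∑ j ∈ I, (F j).card : ℕ) : ℝ) ≤ (1/2 - ε) * n) →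
        P.parts.card ≤ Q.parts.card) :
    ∀ I₁ ∈ P.parts, ∀ I₂ ∈ P.parts, I₁ ≠ I₂ →
      (∀ J ∈ P.parts, J ≠ I₁ → J ≠ I₂ →
        (∑ j ∈ I₁, (F j).card) ≤ (∑ j ∈ J, (F j).card) ∧
        (∑ j ∈ I₂, (F j).card) ≤ (∑ j ∈ J, (F j).card)) →
      ((∑ j ∈ I₁ ∪ I₂, (F j).card : ℕ) : ℝ) ≤ n / 2 ∧
      (1/2 - ε) * n < ((∑ j ∈ I₁ ∪ I₂, (F j).card : ℕ) : ℝ) := by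
  intro I₁ hI₁ I₂ hI₂ h12 hsmallest
  have hunion : ∑ j ∈ I₁ ∪ I₂, (F j).card = ∑ j ∈ I₁, (F j).card + ∑ j ∈ I₂, (F j).card :=
    sum_union (P.disjoint hI₁ hI₂ h12)
  constructor
  · have hhalf := two_nsmul_add_le_sum_of_forall_le
      (f := fun I => ∑ j ∈ I, (F j).card) hI₁ hI₂ h12 hk4 hsmallest
    rw [P.sum_sum_parts, smul_eq_mul, ← hunion] at hhalf
    have hhalf' :
        2 * ((∑ j ∈ I₁ ∪ I₂, (F j).card : ℕ) : ℝ) ≤ ((∑ i, (F i).card : ℕ) : ℝ) := by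
      exact_mod_cast hhalf
    linarith
  · by_contra! hmerged
    have hQ := hmin (P.mergeParts hI₁ hI₂) fun I hI => by
      rcases mem_insert.1 (P.mergeParts_parts_subset hI₁ hI₂ hI) with rfl | hI
      exacts [hmerged, hP I hI]
    have := P.card_parts_mergeParts hI₁ hI₂ h12
    omega

/-- Let `F₁, …, F_t` be pairwise disjoint finite sets, each of size at most
`(1/2 − ε)n` (`0 ≤ ε ≤ 1/2`), of total size at most `n`.  If no partition of `[t]` into at
most 3 blocks has every block-union of size at most `(1/2 − ε)n`, then in any partition
minimizing the number `k ≥ 4` of blocks subject to every block-union having size at most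
`(1/2 − ε)n`, the union of the two smallest blocks has size at most `n/2` and strictly
more than `(1/2 − ε)n`. -/
theorem two_smallest_blocks {α : Type*} [DecidableEq α] {t n : ℕ} (ε : ℝ)
    (hε0 : 0 ≤ ε) (hε2 : ε ≤ 1/2) (F : Fin t → Finset α)
    (hdisj : ∀ i j, i ≠ j → Disjoint (F i) (F j))
    (hsize : ∀ i, ((F i).card : ℝ) ≤ (1/2 - ε) * n)
    (htotal : ((∑ i, (F i).card : ℕ) : ℝ) ≤ n)
    (hno3 : ¬ ∃ P : Finpartition (Finset.univ : Finset (Fin t)),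
        P.parts.card ≤ 3 ∧
        ∀ I ∈ P.parts, ((∑ j ∈ I, (F j).card : ℕ) : ℝ) ≤ (1/2 - ε) * n)
    (P : Finpartition (Finset.univ : Finset (Fin t)))
    (hP : ∀ I ∈ P.parts, ((∑ j ∈ I, (F j).card : ℕ) : ℝ) ≤ (1/2 - ε) * n)
    (hk4 : 4 ≤ P.parts.card)
    (hmin : ∀ Q : Finpartition (Finset.univ : Finset (Fin t)),
        (∀ I ∈ Q.parts, ((∑ j ∈ I, (F j).card : ℕ) : ℝ) ≤ (1/2 - ε) * n) →
        P.parts.card ≤ Q.parts.card) :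
    ∀ I₁ ∈ P.parts, ∀ I₂ ∈ P.parts, I₁ ≠ I₂ →
      (∀ J ∈ P.parts, J ≠ I₁ → J ≠ I₂ →
        (∑ j ∈ I₁, (F j).card) ≤ (∑ j ∈ J, (F j).card) ∧
        (∑ j ∈ I₂, (F j).card) ≤ (∑ j ∈ J, (F j).card)) →
      ((∑ j ∈ I₁ ∪ I₂, (F j).card : ℕ) : ℝ) ≤ n / 2 ∧
      (1/2 - ε) * n < ((∑ j ∈ I₁ ∪ I₂, (F j).card : ℕ) : ℝ) :=
  two_smallest_blocks_general ε F htotal P hP hk4 hmin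
end

section
/- Let G₀, …, G_{k−1} be bipartite graphs whose pairwise intersections all equal a single common vertex g, and let G be their union. If each Gᵢ admits a well-begun lᵢ-encoding, then G admits a well-begun l-encoding with l = max_i lᵢ + ⌈log₂ k⌉. -/
/-- `φ : V → Fin l → ℕ` is an `l`-encoding of `G`. -/
def IsEncoding {V : Type*} (G : SimpleGraph V) (l : ℕ) (φ : V → Fin l → ℕ) : Prop :=
  Function.Injective φ ∧ ∀ u v : V, u ≠ v → (G.Adj u v ↔ ∀ i, φ u i ≠ φ v i)

/-- An encoding is well-begun if its first coordinate takes values in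
`{0, …, χ(G) − 1}`. -/
def IsWellBegun {V : Type*} (G : SimpleGraph V) (l : ℕ) (φ : V → Fin l → ℕ) : Prop :=
  ∀ v : V, ∀ h : 0 < l, ((φ v ⟨0, h⟩ : ℕ) : ℕ∞) < G.chromaticNumber

/-!
Normalise the encoding of each piece so that the shared vertex `g` gets the code `0`, and pad it
to the common length `L + 1` by repeating its coordinates cyclically; since the piece is
bipartite, its first coordinate is a `0/1` colour. Then append `⌈log₂ k⌉` coordinates: the
colour of a vertex `v ≠ g` of the `i`-th piece xor the binary digits of `i`, and the constant `2`
for `g`. Inside a piece these new coordinates differ exactly when the colours do, so every piece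
stays encoded. Two vertices of different pieces are not adjacent, and their codes do meet: in the
first coordinate if the colours agree, and otherwise at a digit where the piece indices differ.
-/

open SimpleGraph

section Encoding

variable {W : Type*} {H : SimpleGraph W}

lemma chromaticNumber_pos_of_nonempty [Nonempty W] : 0 < H.chromaticNumber := by
  simp [pos_iff_ne_zero, not_isEmpty_of_nonempty]

lemma isEncoding_of_subsingleton [Subsingleton W] (l : ℕ) (φ : W → Fin l → ℕ) :
    IsEncoding H l φ :=
  ⟨fun u v _ => Subsingleton.elim u v, fun u v huv => absurd (Subsingleton.elim u v) huv⟩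

lemma isWellBegun_zero [Nonempty W] (l : ℕ) : IsWellBegun H l 0 := fun _ _ => by
  simpa using chromaticNumber_pos_of_nonempty

lemma IsEncoding.subsingleton {l : ℕ} {φ : W → Fin l → ℕ} (hφ : IsEncoding H l φ)
    (hl : l = 0) : Subsingleton W :=
  ⟨fun _ _ => hφ.1 (funext fun t => absurd t.2 (by omega))⟩

lemma IsEncoding.map_coord {l : ℕ} {φ : W → Fin l → ℕ} (hφ : IsEncoding H l φ)
    {σ : Fin l → ℕ → ℕ} (hσ : ∀ t, Function.Injective (σ t)) :
    IsEncoding H l fun v t => σ t (φ v t) :=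
  ⟨fun _ _ h => hφ.1 (funext fun t => hσ t (congrFun h t)),
    fun u v huv => (hφ.2 u v huv).trans (forall_congr' fun t => (hσ t).ne_iff.symm)⟩

lemma IsEncoding.comp_surjective {l L : ℕ} {φ : W → Fin l → ℕ} (hφ : IsEncoding H l φ)
    {r : Fin L → Fin l} (hr : Function.Surjective r) : IsEncoding H L fun v => φ v ∘ r :=
  ⟨fun _ _ h => hφ.1 (hr.injective_comp_right h),
    fun u v huv => (hφ.2 u v huv).trans hr.forall⟩

lemma IsEncoding.exists_eq_zero_at {l : ℕ} {φ : W → Fin l → ℕ} (hφ : IsEncoding H l φ)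
    (hwb : IsWellBegun H l φ) (w : W) :
    ∃ ψ, IsEncoding H l ψ ∧ IsWellBegun H l ψ ∧ ψ w = 0 := by
  have : Nonempty W := ⟨w⟩
  refine ⟨fun v t => Equiv.swap (φ w t) 0 (φ v t),
    hφ.map_coord fun t => (Equiv.swap _ _).injective, fun v h => ?_,
    funext fun t => Equiv.swap_apply_left _ _⟩
  dsimp only
  rw [Equiv.swap_apply_def]
  split_ifs
  · simpa using chromaticNumber_pos_of_nonempty
  · exact hwb w h
  · exact hwb v h

lemma IsEncoding.exists_pad_eq_zero_at {l L : ℕ} {φ : W → Fin l → ℕ}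
    (hφ : IsEncoding H l φ) (hwb : IsWellBegun H l φ) (hl : l ≤ L + 1) (w : W) :
    ∃ ψ : W → Fin (L + 1) → ℕ,
      IsEncoding H (L + 1) ψ ∧ IsWellBegun H (L + 1) ψ ∧ ψ w = 0 := by
  have : Nonempty W := ⟨w⟩
  rcases Nat.eq_zero_or_pos l with rfl | hl0
  · have := hφ.subsingleton rfl
    exact ⟨0, isEncoding_of_subsingleton _ _, isWellBegun_zero _, rfl⟩
  obtain ⟨ψ, hψ, hψwb, hψw⟩ := hφ.exists_eq_zero_at hwb w
  let r : Fin (L + 1) → Fin l := fun t => ⟨t % l, Nat.mod_lt _ hl0⟩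
  have hr : Function.Surjective r :=
    fun s => ⟨⟨s, by omega⟩, Fin.ext (Nat.mod_eq_of_lt s.2)⟩
  exact ⟨fun v => ψ v ∘ r, hψ.comp_surjective hr, fun v _ => by simpa [r] using hψwb v hl0,
    by simp [hψw]⟩

lemma IsWellBegun.le_one {l : ℕ} {φ : W → Fin l → ℕ} (hwb : IsWellBegun H l φ)
    (hH : H.Colorable 2) (v : W) (h : 0 < l) : φ v ⟨0, h⟩ ≤ 1 := by
  have : (φ v ⟨0, h⟩ : ℕ∞) < 2 := (hwb v h).trans_le hH.chromaticNumber_le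
  exact Nat.lt_succ_iff.mp (by exact_mod_cast this)

end Encoding

section Amalgamation

variable {V ι : Type*} {G : SimpleGraph V} {S : ι → Set V}

lemma liftCover_compat_of_inter_eq_singleton {β : Type*} {g : V}
    (hinter : ∀ i j, i ≠ j → S i ∩ S j = {g}) (f : ∀ i, S i → β)
    (hg : ∀ i j (hgi : g ∈ S i) (hgj : g ∈ S j), f i ⟨g, hgi⟩ = f j ⟨g, hgj⟩) :
    ∀ i j (x : V) (hxi : x ∈ S i) (hxj : x ∈ S j), f i ⟨x, hxi⟩ = f j ⟨x, hxj⟩ := by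
  intro i j x hxi hxj
  rcases eq_or_ne i j with rfl | hij
  · rfl
  · have hx : x ∈ S i ∩ S j := ⟨hxi, hxj⟩
    rw [hinter i j hij] at hx
    obtain rfl := hx
    exact hg i j hxi hxj

lemma subsingleton_of_iUnion_eq_univ {g : V} (hS : ⋃ i, S i = Set.univ) (hg : ∀ i, g ∈ S i)
    (hsub : ∀ i, Subsingleton (S i)) : Subsingleton V := by
  have heq : ∀ v, v = g := fun v => by
    obtain ⟨i, hv⟩ := Set.mem_iUnion.mp (hS ▸ Set.mem_univ v)
    exact congrArg Subtype.val (Subsingleton.elim (⟨v, hv⟩ : S i) ⟨g, hg i⟩)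
  exact ⟨fun u v => (heq u).trans (heq v).symm⟩

variable {l : ℕ} {f : ∀ i, S i → Fin l → ℕ}
  {hf : ∀ i j (x : V) (hxi : x ∈ S i) (hxj : x ∈ S j), f i ⟨x, hxi⟩ = f j ⟨x, hxj⟩}
  {hS : ⋃ i, S i = Set.univ}

theorem isEncoding_liftCover (henc : ∀ i, IsEncoding (G.induce (S i)) l (f i))
    (hedges : ∀ u v, G.Adj u v → ∃ i, u ∈ S i ∧ v ∈ S i)
    (hsep : ∀ i j (u : S i) (v : S j), (¬ ∃ m, (u : V) ∈ S m ∧ (v : V) ∈ S m) →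
      f i u ≠ f j v ∧ ∃ t, f i u t = f j v t) :
    IsEncoding G l (Set.liftCover S f hf hS) := by
  have hmem : ∀ v, ∃ i, v ∈ S i := fun v => Set.mem_iUnion.mp (hS ▸ Set.mem_univ v)
  refine ⟨fun u v huv => ?_, fun u v huv => ?_⟩
  all_goals
    obtain ⟨i, hu⟩ := hmem u
    obtain ⟨j, hv⟩ := hmem v
    by_cases hcommon : ∃ m, u ∈ S m ∧ v ∈ S m
  · obtain ⟨m, hum, hvm⟩ := hcommon
    rw [Set.liftCover_of_mem hum, Set.liftCover_of_mem hvm] at huv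
    exact congrArg Subtype.val ((henc m).1 huv)
  · rw [Set.liftCover_of_mem hu, Set.liftCover_of_mem hv] at huv
    exact absurd huv (hsep i j ⟨u, hu⟩ ⟨v, hv⟩ hcommon).1
  · obtain ⟨m, hum, hvm⟩ := hcommon
    rw [Set.liftCover_of_mem hum, Set.liftCover_of_mem hvm]
    exact (henc m).2 ⟨u, hum⟩ ⟨v, hvm⟩ fun h => huv (congrArg Subtype.val h)
  · obtain ⟨-, t, ht⟩ := hsep i j ⟨u, hu⟩ ⟨v, hv⟩ hcommon
    rw [Set.liftCover_of_mem hu, Set.liftCover_of_mem hv]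
    exact iff_of_false (fun hadj => hcommon (hedges u v hadj)) fun h => h t ht

theorem isWellBegun_liftCover (hwb : ∀ i, IsWellBegun (G.induce (S i)) l (f i)) :
    IsWellBegun G l (Set.liftCover S f hf hS) := by
  intro v h
  obtain ⟨i, hv⟩ := Set.mem_iUnion.mp (hS ▸ Set.mem_univ v)
  rw [Set.liftCover_of_mem hv]
  exact (hwb i ⟨v, hv⟩ h).trans_le (chromaticNumber_mono_of_hom (Embedding.induce (S i)).toHom)

end Amalgamation

section Tagging

lemma xor_toNat_le_one {c : ℕ} (hc : c ≤ 1) (b : Bool) : c ^^^ b.toNat ≤ 1 := by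
  interval_cases c <;> cases b <;> decide

lemma xor_toNat_eq_xor_toNat_iff {c d : ℕ} (hc : c ≤ 1) (hd : d ≤ 1) (x y : Bool) :
    c ^^^ x.toNat = d ^^^ y.toNat ↔ (c = d ↔ x = y) := by
  interval_cases c <;> interval_cases d <;> cases x <;> cases y <;> decide

lemma exists_lt_testBit_ne_of_lt_two_pow {i j n : ℕ} (hij : i ≠ j) (hi : i < 2 ^ n)
    (hj : j < 2 ^ n) : ∃ s < n, i.testBit s ≠ j.testBit s := by
  obtain ⟨s, hs⟩ := Nat.exists_testBit_ne_of_ne hij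
  refine ⟨s, lt_of_not_ge fun hns => hs ?_, hs⟩
  have h := Nat.pow_le_pow_right two_pos hns
  rw [Nat.testBit_eq_false_of_lt (hi.trans_le h), Nat.testBit_eq_false_of_lt (hj.trans_le h)]

def tagBits (n i c : ℕ) : Fin n → ℕ := fun s => c ^^^ (i.testBit s).toNat

variable {W : Type*} [DecidableEq W] {H : SimpleGraph W} {L n : ℕ}

def pieceCode (n : ℕ) (ψ : W → Fin (L + 1) → ℕ) (w : W) (i : ℕ) (v : W) :
    Fin (L + 1 + n) → ℕ :=
  Fin.append (ψ v) (if v = w then fun _ => 2 else tagBits n i (ψ v 0))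

@[simp]
lemma pieceCode_castAdd (ψ : W → Fin (L + 1) → ℕ) (w : W) (i : ℕ) (v : W)
    (t : Fin (L + 1)) :
    pieceCode n ψ w i v (Fin.castAdd n t) = ψ v t :=
  Fin.append_left _ _ _

lemma pieceCode_natAdd_ne {ψ : W → Fin (L + 1) → ℕ} {w : W}
    (hcol : ∀ v, ψ v 0 ≤ 1) (i : ℕ) {u v : W} (huv : ψ u 0 ≠ ψ v 0) (s : Fin n) :
    pieceCode n ψ w i u (Fin.natAdd _ s) ≠ pieceCode n ψ w i v (Fin.natAdd _ s) := by
  simp only [pieceCode, Fin.append_right]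
  split_ifs with hu hv hv
  · exact absurd (hu.trans hv.symm ▸ rfl) huv
  · exact ((xor_toNat_le_one (hcol v) _).trans_lt one_lt_two).ne'
  · exact ((xor_toNat_le_one (hcol u) _).trans_lt one_lt_two).ne
  · exact fun h => huv (((xor_toNat_eq_xor_toNat_iff (hcol u) (hcol v) _ _).1 h).2 rfl)

theorem IsEncoding.pieceCode {ψ : W → Fin (L + 1) → ℕ} (hψ : IsEncoding H (L + 1) ψ)
    (hcol : ∀ v, ψ v 0 ≤ 1) (w : W) (i : ℕ) :
    IsEncoding H (L + 1 + n) (pieceCode n ψ w i) := by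
  refine ⟨fun u v h => hψ.1 (funext fun t => by simpa using congrFun h (Fin.castAdd n t)),
    fun u v huv => ?_⟩
  rw [hψ.2 u v huv]
  refine ⟨fun h => (Fin.forall_fin_add _).2 ⟨?_, pieceCode_natAdd_ne hcol i (h 0)⟩,
    fun h t => by simpa using h (Fin.castAdd n t)⟩
  simpa using h

theorem IsWellBegun.pieceCode {ψ : W → Fin (L + 1) → ℕ} (hwb : IsWellBegun H (L + 1) ψ)
    (w : W) (i : ℕ) : IsWellBegun H (L + 1 + n) (pieceCode n ψ w i) := by
  intro v h
  have h0 : (⟨0, h⟩ : Fin (L + 1 + n)) = Fin.castAdd n 0 := rfl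
  rw [h0, pieceCode_castAdd]
  exact hwb v L.succ_pos

theorem pieceCode_ne_and_exists_eq {W' : Type*} [DecidableEq W'] {ψ : W → Fin (L + 1) → ℕ}
    {ψ' : W' → Fin (L + 1) → ℕ} {w u : W} {w' v : W'} {i j : ℕ}
    (hu : u ≠ w) (hv : v ≠ w')
    (hcu : ψ u 0 ≤ 1) (hcv : ψ' v 0 ≤ 1) (hij : i ≠ j) (hi : i < 2 ^ n) (hj : j < 2 ^ n) :
    pieceCode n ψ w i u ≠ pieceCode n ψ' w' j v ∧
      ∃ t, pieceCode n ψ w i u t = pieceCode n ψ' w' j v t := by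
  obtain ⟨s, hs, hbits⟩ := exists_lt_testBit_ne_of_lt_two_pow hij hi hj
  have tail_eq_iff : pieceCode n ψ w i u (Fin.natAdd _ ⟨s, hs⟩) =
      pieceCode n ψ' w' j v (Fin.natAdd _ ⟨s, hs⟩) ↔
        (ψ u 0 = ψ' v 0 ↔ i.testBit s = j.testBit s) := by
    simp only [pieceCode, Fin.append_right, if_neg hu, if_neg hv, tagBits]
    exact xor_toNat_eq_xor_toNat_iff hcu hcv _ _
  refine ⟨fun h => hbits ((tail_eq_iff.1 (congrFun h _)).1 ?_), ?_⟩
  · simpa using congrFun h (Fin.castAdd n 0)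
  by_cases hc : ψ u 0 = ψ' v 0
  · exact ⟨Fin.castAdd n 0, by simpa using hc⟩
  · exact ⟨_, tail_eq_iff.2 (iff_of_false hc hbits)⟩

end Tagging

theorem bipartite_amalgamation_general {V : Type*} (G : SimpleGraph V)
    {k : ℕ} (g : V) (S : Fin k → Set V)
    (hg : ∀ i, g ∈ S i)
    (hinter : ∀ i j, i ≠ j → S i ∩ S j = {g})
    (hcover : (⋃ i, S i) = Set.univ)
    (hedges : ∀ u v : V, G.Adj u v → ∃ i, u ∈ S i ∧ v ∈ S i)
    (hbip : ∀ i, (G.induce (S i)).Colorable 2)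
    (l : Fin k → ℕ)
    (henc : ∀ i, ∃ φ : (S i) → Fin (l i) → ℕ,
      IsEncoding (G.induce (S i)) (l i) φ ∧ IsWellBegun (G.induce (S i)) (l i) φ) :
    ∃ φ : V → Fin (Finset.univ.sup l + Nat.clog 2 k) → ℕ,
      IsEncoding G (Finset.univ.sup l + Nat.clog 2 k) φ ∧
      IsWellBegun G (Finset.univ.sup l + Nat.clog 2 k) φ := by
  classical
  have : Nonempty V := ⟨g⟩
  have hle : ∀ i, l i ≤ Finset.univ.sup l := fun i => Finset.le_sup (Finset.mem_univ i)
  rcases Nat.eq_zero_or_pos (Finset.univ.sup l) with hzero | hpos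
  · have : Subsingleton V := subsingleton_of_iUnion_eq_univ hcover hg fun i =>
      have ⟨_, hφ, _⟩ := henc i
      hφ.subsingleton (Nat.eq_zero_of_le_zero (hzero ▸ hle i))
    exact ⟨0, isEncoding_of_subsingleton _ _, isWellBegun_zero _⟩
  obtain ⟨L, hL⟩ := Nat.exists_eq_add_one_of_ne_zero hpos.ne'
  rw [hL]
  choose ψ hψ hψwb hψg using fun i =>
    have ⟨φ, hφ, hφwb⟩ := henc i
    hφ.exists_pad_eq_zero_at hφwb (hL ▸ hle i) ⟨g, hg i⟩
  have hcol : ∀ i v, ψ i v 0 ≤ 1 := fun i v => (hψwb i).le_one (hbip i) v L.succ_pos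
  have hlt_pow : ∀ i : Fin k, i.val < 2 ^ Nat.clog 2 k :=
    fun i => i.2.trans_le (Nat.le_pow_clog one_lt_two k)
  refine ⟨Set.liftCover S (fun i => pieceCode _ (ψ i) ⟨g, hg i⟩ i)
      (liftCover_compat_of_inter_eq_singleton hinter _ fun i j _ _ => by simp [pieceCode, hψg])
      hcover,
    isEncoding_liftCover (fun i => (hψ i).pieceCode (hcol i) _ i) hedges ?_,
    isWellBegun_liftCover fun i => (hψwb i).pieceCode _ i⟩
  intro i j u v hsep
  have hu : u ≠ ⟨g, hg i⟩ := by rintro rfl; exact hsep ⟨j, hg j, v.2⟩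
  have hv : v ≠ ⟨g, hg j⟩ := by rintro rfl; exact hsep ⟨i, u.2, hg i⟩
  have hij : i ≠ j := by rintro rfl; exact hsep ⟨i, u.2, v.2⟩
  exact pieceCode_ne_and_exists_eq hu hv (hcol i u) (hcol j v) (Fin.val_injective.ne hij)
    (hlt_pow i) (hlt_pow j)

/-- Amalgamation Lemma for Bipartite Graphs.  Let `G₀, …, G_{k−1}` be
bipartite graphs whose pairwise intersections all equal a single common vertex `g`, and
let `G` be their union.  If each `Gᵢ` admits a well-begun `lᵢ`-encoding, then `G` admits
a well-begun `l`-encoding with `l = max_i lᵢ + ⌈log₂ k⌉`. -/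
theorem bipartite_amalgamation {V : Type*} [Fintype V] (G : SimpleGraph V)
    {k : ℕ} (hk : 0 < k) (g : V) (S : Fin k → Set V)
    (hg : ∀ i, g ∈ S i)
    (hinter : ∀ i j, i ≠ j → S i ∩ S j = {g})
    (hcover : (⋃ i, S i) = Set.univ)
    (hedges : ∀ u v : V, G.Adj u v → ∃ i, u ∈ S i ∧ v ∈ S i)
    (hbip : ∀ i, (G.induce (S i)).Colorable 2)
    (l : Fin k → ℕ)
    (henc : ∀ i, ∃ φ : (S i) → Fin (l i) → ℕ,
      IsEncoding (G.induce (S i)) (l i) φ ∧ IsWellBegun (G.induce (S i)) (l i) φ) :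
    ∃ φ : V → Fin (Finset.univ.sup l + Nat.clog 2 k) → ℕ,
      IsEncoding G (Finset.univ.sup l + Nat.clog 2 k) φ ∧
      IsWellBegun G (Finset.univ.sup l + Nat.clog 2 k) φ :=
  bipartite_amalgamation_general G g S hg hinter hcover hedges hbip l henc
end

section
/- Let G be a graph on n vertices with a normalized tree decomposition ({X_i : i ∈ I}, r, T) of width t. Then there exists a node l ∈ I such that the graph G \ X_l is a disjoint union of three (possibly empty) subgraphs G₁, G₂, G₃ with no edges between them, each having at most (n − |X_l| + 1)/2 vertices. -/
/-!
For an edge `l – j` of the tree `T`, the vertices outside `X l` that occur in bags of the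
component of `T - l` containing `j` are `branchVertices T X l j`; for fixed `l` these sets
partition `V \ X l`, with no edge of `G` between two of them. Call the edge heavy when
`2 |branchVertices T X l j| + |X l| > n`. At a node with no heavy edge leaving it, a greedy
packing of the sets into three groups gives the split.

Such a node exists. The two directions of an edge are never both heavy: their vertex sets and
`X l ∩ X j` are pairwise disjoint, while normalization gives `|X l| + |X j| ≤ 2 |X l ∩ X j| + 1`.
If every node had a heavy edge leaving it, then a heavy edge `l → j` with smallest branch would
be followed by a heavy edge `j → k`, necessarily with `k ≠ l`, whose branch is strictly smaller.
-/

namespace SimpleGraph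

variable {I : Type*} {T : SimpleGraph I}

theorem IsAcyclic.mem_edges_of_adj (hT : T.IsAcyclic) {u v : I} (huv : T.Adj u v)
    (p : T.Walk u v) : s(u, v) ∈ p.edges :=
  isBridge_iff_forall_walk_mem_edges.mp (isAcyclic_iff_forall_adj_isBridge.mp hT huv) p

theorem IsAcyclic.mem_support_of_adj_of_adj (hT : T.IsAcyclic) {j k l : I} (hjk : T.Adj j k)
    (hjl : T.Adj j l) (hkl : k ≠ l) (p : T.Walk k l) : j ∈ p.support := by
  have h := hT.mem_edges_of_adj hjl (.cons hjk p)
  rcases List.mem_cons.mp h with h | h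
  · exact absurd (Sym2.congr_right.mp h).symm hkl
  · exact p.fst_mem_support_of_mem_edges h

def branch (T : SimpleGraph I) (l j : I) : Set I := {k | ∃ p : T.Walk j k, l ∉ p.support}

variable {l j k : I}

theorem mem_branch_of_walk {k' : I} (hk : k ∈ T.branch l j) (q : T.Walk k k')
    (hq : l ∉ q.support) : k' ∈ T.branch l j := by
  obtain ⟨p, hp⟩ := hk
  exact ⟨p.append q, by simp [Walk.mem_support_append_iff, hp, hq]⟩

theorem Connected.exists_adj_mem_branch (hT : T.Connected) (hkl : k ≠ l) :
    ∃ j, T.Adj l j ∧ k ∈ T.branch l j := by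
  obtain ⟨p, hp⟩ := (hT.preconnected l k).exists_isPath
  cases p with
  | nil => exact absurd rfl hkl
  | cons h q => exact ⟨_, h, q, (Walk.cons_isPath_iff h q).mp hp |>.2⟩

theorem IsAcyclic.disjoint_branch (hT : T.IsAcyclic) {j' : I} (hj : T.Adj l j)
    (hj' : T.Adj l j') (hne : j ≠ j') : Disjoint (T.branch l j) (T.branch l j') := by
  refine Set.disjoint_left.mpr fun k ⟨p, hp⟩ ⟨q, hq⟩ ↦ ?_
  have := hT.mem_support_of_adj_of_adj hj hj' hne (p.append q.reverse)
  simp_all [Walk.mem_support_append_iff]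

theorem IsAcyclic.disjoint_branch_swap (hT : T.IsAcyclic) (hlj : T.Adj l j) :
    Disjoint (T.branch l j) (T.branch j l) := by
  refine Set.disjoint_left.mpr fun k ⟨p, hp⟩ ⟨q, hq⟩ ↦ ?_
  have := hT.mem_edges_of_adj hlj.symm (p.append q.reverse)
  rw [Walk.edges_append, List.mem_append, Walk.edges_reverse, List.mem_reverse] at this
  rcases this with h | h
  · exact hp (p.snd_mem_support_of_mem_edges h)
  · exact hq (q.fst_mem_support_of_mem_edges h)

theorem IsAcyclic.branch_ssubset (hT : T.IsAcyclic) (hlj : T.Adj l j) (hjk : T.Adj j k)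
    (hkl : k ≠ l) : T.branch j k ⊂ T.branch l j := by
  classical
  have hsub : T.branch j k ⊆ T.branch l j := by
    rintro k' ⟨p, hp⟩
    refine ⟨.cons hjk p, ?_⟩
    have hl : l ∉ p.support := fun hl ↦
      hp (p.support_takeUntil_subset_support hl
        (hT.mem_support_of_adj_of_adj hjk hlj.symm hkl (p.takeUntil l hl)))
    simp [hlj.ne, hl]
  refine (Set.ssubset_iff_of_subset hsub).mpr ⟨j, ⟨.nil, by simp [hlj.ne]⟩, ?_⟩
  rintro ⟨p, hp⟩
  exact hp p.end_mem_support

end SimpleGraph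

theorem Finset.card_symmDiff_add_two_mul_card_inter {α : Type*} [DecidableEq α]
    (s t : Finset α) :
    (symmDiff s t).card + 2 * (s ∩ t).card = s.card + t.card := by
  rw [symmDiff_eq_sup_sdiff_inf, Finset.sup_eq_union, Finset.inf_eq_inter,
    Finset.card_sdiff_of_subset Finset.inter_subset_union]
  have := Finset.card_union_add_card_inter s t
  have := Finset.card_le_card (Finset.inter_subset_union (s := s) (t := t))
  omega

theorem Finset.exists_three_parts_two_mul_sum_le {ι : Type*} [DecidableEq ι] (J : Finset ι)
    (w : ι → ℕ) (m : ℕ) (hw : ∀ j ∈ J, 2 * w j ≤ m) (hJ : ∑ j ∈ J, w j ≤ m) :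
    ∃ A B C : Finset ι, A ∪ B ∪ C = J ∧ Disjoint A B ∧ Disjoint A C ∧ Disjoint B C ∧
      2 * ∑ j ∈ A, w j ≤ m + 1 ∧ 2 * ∑ j ∈ B, w j ≤ m + 1 ∧ 2 * ∑ j ∈ C, w j ≤ m + 1 := by
  obtain ⟨A, hAF, hAmax⟩ := (J.powerset.filter fun A ↦ 2 * ∑ j ∈ A, w j ≤ m + 1).exists_max_image
    (fun A ↦ ∑ j ∈ A, w j) ⟨∅, by simp⟩
  rw [Finset.mem_filter, Finset.mem_powerset] at hAF
  obtain ⟨hAJ, hA⟩ := hAF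
  have hsplit : ∑ j ∈ J \ A, w j + ∑ j ∈ A, w j = ∑ j ∈ J, w j := Finset.sum_sdiff hAJ
  -- If the rest of `J` is too heavy, it fits after removing one `j₀` of positive weight,
  -- since by maximality `A ∪ {j₀}` is already too heavy.
  by_cases hrest : 2 * ∑ j ∈ J \ A, w j ≤ m + 1
  · refine ⟨A, J \ A, ∅, by simp [hAJ], Finset.disjoint_sdiff, by simp, by simp, hA, hrest,
      by simp⟩
  obtain ⟨j₀, hj₀, hwj₀⟩ : ∃ j₀ ∈ J \ A, w j₀ ≠ 0 :=
    Finset.exists_ne_zero_of_sum_ne_zero (by omega)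
  obtain ⟨hj₀J, hj₀A⟩ := Finset.mem_sdiff.mp hj₀
  have hover : m + 1 < 2 * (w j₀ + ∑ j ∈ A, w j) := by
    by_contra! hfit
    have := hAmax (insert j₀ A)
      (by simp [Finset.insert_subset hj₀J hAJ, Finset.sum_insert hj₀A, hfit])
    rw [Finset.sum_insert hj₀A] at this
    omega
  have hj₀sum := Finset.sum_erase_add _ w hj₀
  refine ⟨A, (J \ A).erase j₀, {j₀}, ?_, ?_, ?_, ?_, hA, ?_, ?_⟩
  · ext j
    by_cases j = j₀ <;> by_cases j ∈ A <;> aesop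
  · exact Finset.disjoint_of_subset_right (Finset.erase_subset _ _) Finset.disjoint_sdiff
  · simpa using hj₀A
  · simp
  · omega
  · simpa using (hw j₀ hj₀J).trans m.le_succ

theorem SimpleGraph.exists_three_parts_of_iUnion {V ι : Type*} [Finite V] [DecidableEq ι]
    (G : SimpleGraph V) (J : Finset ι) (s : ι → Set V) (S : Set V) (hS : ⋃ j ∈ J, s j = S)
    (hs : (J : Set ι).PairwiseDisjoint s)
    (hadj : ∀ i ∈ J, ∀ j ∈ J, i ≠ j → ∀ a ∈ s i, ∀ b ∈ s j, ¬ G.Adj a b)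
    (hsmall : ∀ j ∈ J, 2 * (s j).ncard ≤ S.ncard) :
    ∃ G₁ G₂ G₃ : Set V,
      Disjoint G₁ G₂ ∧ Disjoint G₁ G₃ ∧ Disjoint G₂ G₃ ∧ G₁ ∪ G₂ ∪ G₃ = S ∧
      (∀ a ∈ G₁, ∀ b ∈ G₂, ¬ G.Adj a b) ∧ (∀ a ∈ G₁, ∀ b ∈ G₃, ¬ G.Adj a b) ∧
      (∀ a ∈ G₂, ∀ b ∈ G₃, ¬ G.Adj a b) ∧
      2 * G₁.ncard ≤ S.ncard + 1 ∧ 2 * G₂.ncard ≤ S.ncard + 1 ∧ 2 * G₃.ncard ≤ S.ncard + 1 := by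
  have hncard : ∀ K ⊆ J, (⋃ j ∈ K, s j).ncard = ∑ j ∈ K, (s j).ncard := fun K hK ↦ by
    rw [← finsum_mem_coe_finset]
    exact (Set.toFinite _).ncard_biUnion (fun _ _ ↦ Set.toFinite _) (hs.subset hK)
  have hdisj : ∀ K ⊆ J, ∀ K' ⊆ J, Disjoint K K' →
      Disjoint (⋃ j ∈ K, s j) (⋃ j ∈ K', s j) := fun K hK K' hK' hKK' ↦ by
    simp only [Set.disjoint_iUnion_left, Set.disjoint_iUnion_right]
    exact fun j hj i hi ↦ hs (hK hi) (hK' hj) (Finset.disjoint_left.mp hKK' hi <| · ▸ hj)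
  have hnadj : ∀ K ⊆ J, ∀ K' ⊆ J, Disjoint K K' →
      ∀ a ∈ ⋃ j ∈ K, s j, ∀ b ∈ ⋃ j ∈ K', s j, ¬ G.Adj a b := fun K hK K' hK' hKK' a ha b hb ↦ by
    simp only [Set.mem_iUnion] at ha hb
    obtain ⟨i, hi, ha⟩ := ha
    obtain ⟨j, hj, hb⟩ := hb
    exact hadj i (hK hi) j (hK' hj) (Finset.disjoint_left.mp hKK' hi <| · ▸ hj) a ha b hb
  obtain ⟨A, B, C, hABC, hAB, hAC, hBC, hA, hB, hC⟩ :=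
    J.exists_three_parts_two_mul_sum_le (fun j ↦ (s j).ncard) S.ncard hsmall
      (by rw [← hS, hncard J subset_rfl])
  have hAJ : A ⊆ J := hABC ▸ Finset.subset_union_left.trans Finset.subset_union_left
  have hBJ : B ⊆ J := hABC ▸ Finset.subset_union_right.trans Finset.subset_union_left
  have hCJ : C ⊆ J := hABC ▸ Finset.subset_union_right
  refine ⟨⋃ j ∈ A, s j, ⋃ j ∈ B, s j, ⋃ j ∈ C, s j, hdisj A hAJ B hBJ hAB,
    hdisj A hAJ C hCJ hAC, hdisj B hBJ C hCJ hBC, ?_, hnadj A hAJ B hBJ hAB,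
    hnadj A hAJ C hCJ hAC, hnadj B hBJ C hCJ hBC, hncard A hAJ ▸ hA, hncard B hBJ ▸ hB,
    hncard C hCJ ▸ hC⟩
  rw [← Finset.set_biUnion_union, ← Finset.set_biUnion_union, hABC, hS]

section TreeDecomposition

open SimpleGraph

variable {V I : Type*} {T : SimpleGraph I} {X : I → Finset V} {l j : I}

def branchVertices (T : SimpleGraph I) (X : I → Finset V) (l j : I) : Set V :=
  {v | v ∉ X l ∧ ∃ k ∈ T.branch l j, v ∈ X k}

theorem mem_branch_of_mem_bag (hconn : ∀ v, (T.induce {i | v ∈ X i}).Connected) {v : V}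
    {a b : I} (hvl : v ∉ X l) (ha : a ∈ T.branch l j) (hva : v ∈ X a) (hvb : v ∈ X b) :
    b ∈ T.branch l j := by
  obtain ⟨p⟩ := (hconn v).preconnected ⟨a, hva⟩ ⟨b, hvb⟩
  refine mem_branch_of_walk ha (p.map (Embedding.induce _).toHom) fun hl ↦ ?_
  obtain ⟨c, -, hc⟩ := List.mem_map.mp ((Walk.support_map _ p) ▸ hl)
  exact hvl (hc ▸ c.2)

theorem disjoint_branchVertices (hT : T.IsAcyclic)
    (hconn : ∀ v, (T.induce {i | v ∈ X i}).Connected) {j' : I} (hj : T.Adj l j)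
    (hj' : T.Adj l j') (hne : j ≠ j') :
    Disjoint (branchVertices T X l j) (branchVertices T X l j') :=
  Set.disjoint_left.mpr fun _ ⟨hvl, _, ha, hva⟩ ⟨_, _, hb, hvb⟩ ↦
    Set.disjoint_left.mp (hT.disjoint_branch hj hj' hne)
      (mem_branch_of_mem_bag hconn hvl ha hva hvb) hb

theorem not_adj_of_mem_branchVertices {G : SimpleGraph V} (hT : T.IsAcyclic)
    (hconn : ∀ v, (T.induce {i | v ∈ X i}).Connected)
    (hcoverE : ∀ u v : V, G.Adj u v → ∃ i, u ∈ X i ∧ v ∈ X i) {j' : I} (hj : T.Adj l j)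
    (hj' : T.Adj l j') (hne : j ≠ j') :
    ∀ a ∈ branchVertices T X l j, ∀ b ∈ branchVertices T X l j', ¬ G.Adj a b := by
  intro a ha b hb hab
  obtain ⟨hal, k, hk, hak⟩ := ha
  obtain ⟨i, hai, hbi⟩ := hcoverE a b hab
  have hbj : b ∈ branchVertices T X l j :=
    ⟨hb.1, i, mem_branch_of_mem_bag hconn hal hk hak hai, hbi⟩
  exact Set.disjoint_left.mp (disjoint_branchVertices hT hconn hj hj' hne) hbj hb

theorem iUnion_branchVertices (hT : T.Connected) (hcoverV : ∀ v : V, ∃ i, v ∈ X i) (l : I) :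
    ⋃ (j) (_ : T.Adj l j), branchVertices T X l j = (X l : Set V)ᶜ := by
  ext v
  simp only [Set.mem_iUnion, Set.mem_compl_iff, Finset.mem_coe]
  refine ⟨fun ⟨_, _, hvl, _⟩ ↦ hvl, fun hvl ↦ ?_⟩
  obtain ⟨k, hk⟩ := hcoverV v
  obtain ⟨j, hj, hkj⟩ := hT.exists_adj_mem_branch (show k ≠ l by rintro rfl; exact hvl hk)
  exact ⟨j, hj, hvl, k, hkj, hk⟩

def IsHeavyEdge [Fintype V] (T : SimpleGraph I) (X : I → Finset V) (l j : I) : Prop :=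
  T.Adj l j ∧ Fintype.card V < 2 * (branchVertices T X l j).ncard + (X l).card

theorem IsHeavyEdge.not_swap [Fintype V] [DecidableEq V] (hT : T.IsAcyclic)
    (hconn : ∀ v, (T.induce {i | v ∈ X i}).Connected)
    (hnorm : (symmDiff (X l) (X j)).card ≤ 1) :
    IsHeavyEdge T X l j → ¬ IsHeavyEdge T X j l := by
  rintro ⟨hlj, hlj_heavy⟩ ⟨-, hjl_heavy⟩
  set A := branchVertices T X l j
  set B := branchVertices T X j l
  set C : Set V := ↑(X l ∩ X j)
  have hAB : Disjoint A B :=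
    Set.disjoint_left.mpr fun _ ⟨hvl, _, ha, hva⟩ ⟨_, _, hb, hvb⟩ ↦
      Set.disjoint_left.mp (hT.disjoint_branch_swap hlj)
        (mem_branch_of_mem_bag hconn hvl ha hva hvb) hb
  have hAC : Disjoint A C :=
    Set.disjoint_left.mpr fun _ hv hvC ↦ hv.1 (Finset.mem_inter.mp hvC).1
  have hBC : Disjoint B C :=
    Set.disjoint_left.mpr fun _ hv hvC ↦ hv.1 (Finset.mem_inter.mp hvC).2
  have hcount : A.ncard + B.ncard + (X l ∩ X j).card ≤ Fintype.card V := by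
    rw [← Set.ncard_union_eq hAB, ← Set.ncard_coe_finset,
      ← Set.ncard_union_eq (Set.disjoint_union_left.mpr ⟨hAC, hBC⟩), ← Nat.card_eq_fintype_card]
    exact Set.ncard_le_card _
  have := Finset.card_symmDiff_add_two_mul_card_inter (X l) (X j)
  omega

theorem two_mul_ncard_branchVertices_le [Fintype V] (hlj : T.Adj l j)
    (h : ¬ IsHeavyEdge T X l j) :
    2 * (branchVertices T X l j).ncard ≤ ((X l : Set V)ᶜ).ncard := by
  rw [Set.ncard_compl, Set.ncard_coe_finset, Nat.card_eq_fintype_card]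
  have := not_lt.mp fun h' ↦ h ⟨hlj, h'⟩
  omega

theorem exists_forall_not_isHeavyEdge [Fintype V] [DecidableEq V] [Finite I] (hT : T.IsAcyclic)
    (hconn : ∀ v, (T.induce {i | v ∈ X i}).Connected)
    (hnorm : ∀ i i', T.Adj i i' → (symmDiff (X i) (X i')).card ≤ 1) (r : I) :
    ∃ l, ∀ j, ¬ IsHeavyEdge T X l j := by
  by_contra! hheavy
  obtain ⟨j₀, h₀⟩ := hheavy r
  obtain ⟨⟨l, j⟩, hlj, hmin⟩ := (measure fun e : I × I ↦ (T.branch e.1 e.2).ncard).wf.has_min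
    {e | IsHeavyEdge T X e.1 e.2} ⟨(r, j₀), h₀⟩
  obtain ⟨k, hjk⟩ := hheavy j
  by_cases hkl : k = l
  · subst hkl
    exact IsHeavyEdge.not_swap hT hconn (hnorm _ _ hlj.1) hlj hjk
  · exact hmin (j, k) hjk (Set.ncard_lt_ncard (hT.branch_ssubset hlj.1 hjk.1 hkl))

end TreeDecomposition

theorem normalized_tree_decomposition_split_general {V I : Type*} [Fintype V] [DecidableEq V]
    [Fintype I] (G : SimpleGraph V) (T : SimpleGraph I) (X : I → Finset V) (r : I)
    -- tree decomposition conditions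
    (htree : T.Connected ∧ T.IsAcyclic)
    (hcoverV : ∀ v : V, ∃ i, v ∈ X i)
    (hcoverE : ∀ u v : V, G.Adj u v → ∃ i, u ∈ X i ∧ v ∈ X i)
    (hconn : ∀ v : V, (T.induce {i | v ∈ X i}).Connected)
    -- normalization
    (hnorm : ∀ i i', T.Adj i i' → (symmDiff (X i) (X i')).card = 1) :
    ∃ l : I, ∃ G₁ G₂ G₃ : Set V,
      Disjoint G₁ G₂ ∧ Disjoint G₁ G₃ ∧ Disjoint G₂ G₃ ∧
      G₁ ∪ G₂ ∪ G₃ = ((X l : Set V))ᶜ ∧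
      (∀ a ∈ G₁, ∀ b ∈ G₂, ¬ G.Adj a b) ∧
      (∀ a ∈ G₁, ∀ b ∈ G₃, ¬ G.Adj a b) ∧
      (∀ a ∈ G₂, ∀ b ∈ G₃, ¬ G.Adj a b) ∧
      2 * G₁.ncard ≤ Fintype.card V - (X l).card + 1 ∧
      2 * G₂.ncard ≤ Fintype.card V - (X l).card + 1 ∧
      2 * G₃.ncard ≤ Fintype.card V - (X l).card + 1 := by
  classical
  obtain ⟨l, hl⟩ :=
    exists_forall_not_isHeavyEdge htree.2 hconn (fun i i' h ↦ (hnorm i i' h).le) r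
  have hcompl : ((X l : Set V)ᶜ).ncard = Fintype.card V - (X l).card := by
    rw [Set.ncard_compl, Set.ncard_coe_finset, Nat.card_eq_fintype_card]
  have hJ : ∀ {j}, j ∈ Finset.univ.filter (T.Adj l) ↔ T.Adj l j := by simp
  refine ⟨l, hcompl ▸ G.exists_three_parts_of_iUnion (Finset.univ.filter (T.Adj l))
    (branchVertices T X l) _ ?_ ?_ ?_ ?_⟩
  · simpa using iUnion_branchVertices htree.1 hcoverV l
  · exact fun i hi j hj ↦ disjoint_branchVertices htree.2 hconn (hJ.mp hi) (hJ.mp hj)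
  · exact fun i hi j hj ↦
      not_adj_of_mem_branchVertices htree.2 hconn hcoverE (hJ.mp hi) (hJ.mp hj)
  · exact fun j hj ↦ two_mul_ncard_branchVertices_le (hJ.mp hj) (hl j)

/-- Splitting Lemma for Bounded Treewidth Graphs.  If `G` on `n` vertices
has a normalized tree decomposition `({X_i}, r, T)` of width `t`, then there is a node
`l` such that `G \ X_l` is the disjoint union of three (possibly empty) parts with no
edges between them, each of size at most `(n − |X_l| + 1)/2`. -/
theorem normalized_tree_decomposition_split {V I : Type*} [Fintype V] [DecidableEq V]
    [Fintype I] (G : SimpleGraph V) (T : SimpleGraph I) (X : I → Finset V) (r : I)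
    (t : ℕ)
    -- tree decomposition conditions
    (htree : T.Connected ∧ T.IsAcyclic)
    (hcoverV : ∀ v : V, ∃ i, v ∈ X i)
    (hcoverE : ∀ u v : V, G.Adj u v → ∃ i, u ∈ X i ∧ v ∈ X i)
    (hconn : ∀ v : V, (T.induce {i | v ∈ X i}).Connected)
    -- width `t`
    (hwidth : ∀ i, (X i).card ≤ t + 1)
    -- normalization
    (hroot : (X r).card = 1)
    (hnorm : ∀ i i', T.Adj i i' → (symmDiff (X i) (X i')).card = 1) :
    ∃ l : I, ∃ G₁ G₂ G₃ : Set V,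
      Disjoint G₁ G₂ ∧ Disjoint G₁ G₃ ∧ Disjoint G₂ G₃ ∧
      G₁ ∪ G₂ ∪ G₃ = ((X l : Set V))ᶜ ∧
      (∀ a ∈ G₁, ∀ b ∈ G₂, ¬ G.Adj a b) ∧
      (∀ a ∈ G₁, ∀ b ∈ G₃, ¬ G.Adj a b) ∧
      (∀ a ∈ G₂, ∀ b ∈ G₃, ¬ G.Adj a b) ∧
      2 * G₁.ncard ≤ Fintype.card V - (X l).card + 1 ∧
      2 * G₂.ncard ≤ Fintype.card V - (X l).card + 1 ∧
      2 * G₃.ncard ≤ Fintype.card V - (X l).card + 1 :=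
  normalized_tree_decomposition_split_general G T X r htree hcoverV hcoverE hconn hnorm
end

section
/- Every graph G on at most t+3 vertices has product dimension at most t+2; in particular, any graph on m ≥ 3 vertices has product dimension at most m − 1. -/
/-- The product dimension of a graph. -/
noncomputable def pdim {V : Type*} (G : SimpleGraph V) : ℕ :=
  sInf {l | ∃ φ : V → Fin l → ℕ, IsEncoding G l φ}

section Encoding

variable {V : Type*} (G : SimpleGraph V)

theorem IsEncoding.comap {W : Type*} (f : W ↪ V) {l : ℕ} {φ : V → Fin l → ℕ}
    (h : IsEncoding G l φ) : IsEncoding (G.comap f) l (φ ∘ f) :=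
  ⟨h.1.comp f.injective, fun x y hxy => h.2 (f x) (f y) (f.injective.ne hxy)⟩

theorem exists_isEncoding_of_comap_equiv {W : Type*} (e : W ≃ V) {l : ℕ}
    (h : ∃ φ, IsEncoding (G.comap e) l φ) : ∃ φ, IsEncoding G l φ := by
  obtain ⟨φ, hφ⟩ := h
  have hG : (G.comap e).comap e.symm.toEmbedding = G := by ext; simp
  exact ⟨_, hG ▸ hφ.comap _ e.symm.toEmbedding⟩

theorem pdim_le_of_isEncoding {l : ℕ} {φ : V → Fin l → ℕ} (h : IsEncoding G l φ) :
    pdim G ≤ l :=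
  Nat.sInf_le ⟨φ, h⟩

end Encoding

section Classes

variable {V β : Type*}

def SameClass (q : V → β) (A : V → Prop) (x y : V) : Prop :=
  q x = q y ∧ A x ∧ A y

theorem SameClass.symm {q : V → β} {A : V → Prop} {x y : V} (h : SameClass q A x y) :
    SameClass q A y x :=
  ⟨h.1.symm, h.2.2, h.2.1⟩

open Classical in
noncomputable def classValue (q : V → β) (A : V → Prop) (x : V) : β ⊕ V :=
  if A x then .inl (q x) else .inr x

theorem classValue_eq_classValue_iff {q : V → β} {A : V → Prop} {x y : V} (hxy : x ≠ y) :
    classValue q A x = classValue q A y ↔ SameClass q A x y := by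
  by_cases hx : A x <;> by_cases hy : A y <;> simp [classValue, SameClass, hx, hy, hxy]

variable (G : SimpleGraph V)

theorem exists_isEncoding_of_classes [Countable V] [Countable β] {ι : Type*} [Fintype ι]
    (q : ι → V → β) (A : ι → V → Prop)
    (hsound : ∀ i x y, x ≠ y → SameClass (q i) (A i) x y → ¬G.Adj x y)
    (hcover : ∀ x y, x ≠ y → ¬G.Adj x y → ∃ i, SameClass (q i) (A i) x y)
    (hsep : ∀ x y, x ≠ y → ∃ i, ¬SameClass (q i) (A i) x y) :
    ∃ φ, IsEncoding G (Fintype.card ι) φ := by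
  obtain ⟨code, hcode⟩ := Countable.exists_injective_nat (β ⊕ V)
  let e := Fintype.equivFin ι
  have hφ : ∀ {x y}, x ≠ y → ∀ i,
      code (classValue (q i) (A i) x) = code (classValue (q i) (A i) y) ↔
        SameClass (q i) (A i) x y := fun hxy i =>
    hcode.eq_iff.trans (classValue_eq_classValue_iff hxy)
  refine ⟨fun x j => code (classValue (q (e.symm j)) (A (e.symm j)) x), ?_, ?_⟩
  · intro x y hxy
    by_contra hne
    obtain ⟨i, hi⟩ := hsep x y hne
    exact hi ((hφ hne i).1 (by simpa using congrFun hxy (e i)))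
  · intro x y hxy
    refine ⟨fun hadj j hj => hsound _ x y hxy ((hφ hxy _).1 hj) hadj, fun hall => ?_⟩
    by_contra hn
    obtain ⟨i, hi⟩ := hcover x y hxy hn
    exact hall (e i) (by simpa using (hφ hxy i).2 hi)

theorem exists_isEncoding_of_forall_adj [Countable V] (hG : ∀ x y, x ≠ y → G.Adj x y) :
    ∃ φ, IsEncoding G 1 φ :=
  exists_isEncoding_of_classes G (ι := Unit) (fun _ _ => ()) (fun _ _ => False)
    (fun _ _ _ _ h => h.2.1.elim) (fun x y hxy hn => (hn (hG x y hxy)).elim)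
    (fun _ _ _ => ⟨(), fun h => h.2.1⟩)

end Classes

theorem Sym2.mk_two_mul_sub_eq_iff {R : Type*} [CommRing R] {k a b : R} :
    s(a, 2 * k - a) = s(b, 2 * k - b) ↔ a = b ∨ a + b = 2 * k := by
  rw [Sym2.eq_iff]
  constructor
  · rintro (⟨h, -⟩ | ⟨h, -⟩)
    · exact .inl h
    · exact .inr (by linear_combination h)
  · rintro (h | h)
    · exact .inl ⟨h, by rw [h]⟩
    · exact .inr ⟨by linear_combination h, by linear_combination -h⟩

section RoundRobin

variable {S : Type*} {m : ℕ}

def roundLabel (k : ZMod m) : S ⊕ ZMod m → ZMod m :=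
  Sum.elim (fun _ => k) id

@[simp] theorem roundLabel_inl (k : ZMod m) (s : S) : roundLabel k (.inl s) = k := rfl

@[simp] theorem roundLabel_inr (k a : ZMod m) : roundLabel k (.inr a : S ⊕ ZMod m) = a := rfl

def roundClass (k : ZMod m) (x : S ⊕ ZMod m) : Sym2 (ZMod m) :=
  s(roundLabel k x, 2 * k - roundLabel k x)

def RoundAttached (G : SimpleGraph (S ⊕ ZMod m)) (k : ZMod m) (x : S ⊕ ZMod m) : Prop :=
  ¬G.Adj x (.inr (2 * k - roundLabel k x))

theorem roundClass_inl_eq_inr_iff {k b : ZMod m} {s : S} :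
    roundClass k (.inl s) = roundClass k (.inr b : S ⊕ ZMod m) ↔ k = b := by
  rw [roundClass, roundClass, roundLabel_inl, roundLabel_inr, Sym2.mk_two_mul_sub_eq_iff]
  refine ⟨?_, .inl⟩
  rintro (h | h)
  exacts [h, by linear_combination -h]

theorem roundClass_inr_eq_inr_iff {k a b : ZMod m} (hab : a ≠ b) :
    roundClass k (.inr a : S ⊕ ZMod m) = roundClass k (.inr b : S ⊕ ZMod m) ↔ a + b = 2 * k := by
  rw [roundClass, roundClass, roundLabel_inr, Sym2.mk_two_mul_sub_eq_iff]
  exact or_iff_right hab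

variable (G : SimpleGraph (S ⊕ ZMod m))

theorem roundAttached_inl {k : ZMod m} {s : S} :
    RoundAttached G k (.inl s) ↔ ¬G.Adj (.inl s) (.inr k) := by
  simp [RoundAttached, two_mul]

theorem roundAttached_inr_self {k : ZMod m} : RoundAttached G k (.inr k) := by
  simp [RoundAttached, two_mul]

theorem roundAttached_inr {k a b : ZMod m} (h : a + b = 2 * k) :
    RoundAttached G k (.inr a) ↔ ¬G.Adj (.inr a) (.inr b) := by
  rw [RoundAttached, roundLabel_inr, show 2 * k - a = b by linear_combination -h]

theorem not_adj_of_sameClass_round (hS : ∀ s s', ¬G.Adj (.inl s) (.inl s')) {k : ZMod m}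
    {x y : S ⊕ ZMod m} (hxy : x ≠ y)
    (h : SameClass (roundClass k) (RoundAttached G k) x y) : ¬G.Adj x y := by
  obtain ⟨hq, hx, hy⟩ := h
  rcases x with s | a <;> rcases y with s' | b
  · exact hS s s'
  · obtain rfl := roundClass_inl_eq_inr_iff.1 hq
    exact (roundAttached_inl G).1 hx
  · obtain rfl := roundClass_inl_eq_inr_iff.1 hq.symm
    exact fun h => (roundAttached_inl G).1 hy h.symm
  · have hab : a ≠ b := fun h => hxy (h ▸ rfl)
    exact (roundAttached_inr G ((roundClass_inr_eq_inr_iff hab).1 hq)).1 hx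

theorem exists_sameClass_round (h2 : IsUnit (2 : ZMod m)) {x : S ⊕ ZMod m} {b : ZMod m}
    (hne : x ≠ .inr b) (hn : ¬G.Adj x (.inr b)) :
    ∃ k, SameClass (roundClass k) (RoundAttached G k) x (.inr b) := by
  rcases x with s | a
  · exact ⟨b, roundClass_inl_eq_inr_iff.2 rfl, (roundAttached_inl G).2 hn,
      roundAttached_inr_self G⟩
  · have hab : a ≠ b := fun h => hne (h ▸ rfl)
    obtain ⟨u, hu⟩ := h2.exists_right_inv
    have hk : a + b = 2 * (u * (a + b)) := by rw [← mul_assoc, hu, one_mul]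
    exact ⟨u * (a + b), (roundClass_inr_eq_inr_iff hab).2 hk, (roundAttached_inr G hk).2 hn,
      (roundAttached_inr G (by linear_combination hk)).2 fun h => hn h.symm⟩

theorem eq_of_roundClass_eq (h2 : IsUnit (2 : ZMod m)) {x : S ⊕ ZMod m} {b : ZMod m}
    (hne : x ≠ .inr b) {k k' : ZMod m} (hk : roundClass k x = roundClass k (.inr b : S ⊕ ZMod m))
    (hk' : roundClass k' x = roundClass k' (.inr b : S ⊕ ZMod m)) : k = k' := by
  rcases x with s | a
  · exact (roundClass_inl_eq_inr_iff.1 hk).trans (roundClass_inl_eq_inr_iff.1 hk').symm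
  · have hab : a ≠ b := fun h => hne (h ▸ rfl)
    exact h2.mul_left_cancel <|
      ((roundClass_inr_eq_inr_iff hab).1 hk).symm.trans ((roundClass_inr_eq_inr_iff hab).1 hk')

end RoundRobin

section RoundRobinEncodings

variable {m : ℕ} [NeZero m]

theorem exists_isEncoding_roundRobin (G : SimpleGraph (Unit ⊕ ZMod m))
    (h2 : IsUnit (2 : ZMod m)) (h01 : (0 : ZMod m) ≠ 1) : ∃ φ, IsEncoding G m φ := by
  suffices ∃ φ, IsEncoding G (Fintype.card (ZMod m)) φ by rwa [ZMod.card] at this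
  refine exists_isEncoding_of_classes G roundClass (RoundAttached G)
    (fun _ _ _ => not_adj_of_sameClass_round G fun _ _ => G.irrefl) ?_ ?_
  · intro x y hxy hn
    rcases y with ⟨⟩ | b
    · rcases x with ⟨⟩ | a
      · exact absurd rfl hxy
      · obtain ⟨k, hk⟩ := exists_sameClass_round G h2 hxy.symm fun h => hn h.symm
        exact ⟨k, hk.symm⟩
    · exact exists_sameClass_round G h2 hxy hn
  · intro x y hxy
    by_contra! h
    refine h01 ?_
    rcases y with ⟨⟩ | b
    · rcases x with ⟨⟩ | a
      · exact absurd rfl hxy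
      · exact eq_of_roundClass_eq h2 hxy.symm (h 0).1.symm (h 1).1.symm
    · exact eq_of_roundClass_eq h2 hxy (h 0).1 (h 1).1

theorem exists_isEncoding_roundRobin_pair {S : Type*} [Countable S]
    (G : SimpleGraph (S ⊕ ZMod m)) (h2 : IsUnit (2 : ZMod m)) {v w : S}
    (hS : ∀ s, s = v ∨ s = w) (hvw : ¬G.Adj (.inl v) (.inl w)) :
    ∃ φ, IsEncoding G (m + 1) φ := by
  have hindep : ∀ s s', ¬G.Adj (.inl s) (.inl s') := by
    intro s s'
    rcases hS s with rfl | rfl <;> rcases hS s' with rfl | rfl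
    exacts [G.irrefl, hvw, fun h => hvw h.symm, G.irrefl]
  -- If every round splits `v` and `w`, the extra coordinate `none` joins them; otherwise some
  -- round joins them and the extra coordinate splits every pair.
  let Apart : Prop := ∀ k, G.Adj (.inl v) (.inr k) ∨ G.Adj (.inl w) (.inr k)
  let q : Option (ZMod m) → S ⊕ ZMod m → Sym2 (ZMod m) :=
    fun i => i.elim (fun _ => s(0, 0)) roundClass
  let A : Option (ZMod m) → S ⊕ ZMod m → Prop :=
    fun i => i.elim (fun x => Apart ∧ ∃ s, x = .inl s) (RoundAttached G)
  have hspecial : ∀ s s' : S, ∃ i, SameClass (q i) (A i) (.inl s) (.inl s') := by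
    intro s s'
    by_cases hA : Apart
    · exact ⟨none, rfl, ⟨hA, s, rfl⟩, hA, s', rfl⟩
    · obtain ⟨k, hvk, hwk⟩ : ∃ k, ¬G.Adj (.inl v) (.inr k) ∧ ¬G.Adj (.inl w) (.inr k) := by
        simpa [Apart, not_or] using hA
      have hk : ∀ s, RoundAttached G k (.inl s) := fun s => by
        rcases hS s with rfl | rfl <;> simpa [roundAttached_inl]
      exact ⟨some k, rfl, hk s, hk s'⟩
  suffices ∃ φ, IsEncoding G (Fintype.card (Option (ZMod m))) φ by
    rwa [Fintype.card_option, ZMod.card] at this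
  refine exists_isEncoding_of_classes G q A ?_ ?_ ?_
  · rintro (_ | k) x y hxy h
    · obtain ⟨-, ⟨-, s, rfl⟩, -, s', rfl⟩ := h
      exact hindep s s'
    · exact not_adj_of_sameClass_round G hindep hxy h
  · intro x y hxy hn
    rcases y with s' | b
    · rcases x with s | a
      · exact hspecial s s'
      · obtain ⟨k, hk⟩ := exists_sameClass_round G h2 hxy.symm fun h => hn h.symm
        exact ⟨some k, hk.symm⟩
    · obtain ⟨k, hk⟩ := exists_sameClass_round G h2 hxy hn
      exact ⟨some k, hk⟩
  · intro x y hxy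
    by_cases h : SameClass (q none) (A none) x y
    · obtain ⟨-, ⟨hA, s, rfl⟩, -, s', rfl⟩ := h
      refine ⟨some 0, fun ⟨_, hs, hs'⟩ => ?_⟩
      rw [show A (some 0) = RoundAttached G 0 from rfl, roundAttached_inl] at hs hs'
      rcases hS s with rfl | rfl <;> rcases hS s' with rfl | rfl
      all_goals first | exact hxy rfl | exact (hA 0).elim hs hs' | exact (hA 0).elim hs' hs
    · exact ⟨none, h⟩

end RoundRobinEncodings

theorem ZMod.isUnit_two_of_odd {m : ℕ} (hm : Odd m) : IsUnit (2 : ZMod m) := by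
  simpa using (ZMod.isUnit_iff_coprime 2 m).2 (Nat.coprime_two_left.2 hm)

section Bounds

variable {V : Type*} [Fintype V] (G : SimpleGraph V)

theorem exists_isEncoding_of_even (h4 : 4 ≤ Fintype.card V) (he : Even (Fintype.card V)) :
    ∃ φ, IsEncoding G (Fintype.card V - 1) φ := by
  set m := Fintype.card V - 1
  have hm : Odd m := by obtain ⟨j, hj⟩ := he; exact ⟨j - 1, by omega⟩
  have : NeZero m := ⟨by omega⟩
  have : Fact (1 < m) := ⟨by omega⟩
  let e : Unit ⊕ ZMod m ≃ V := Fintype.equivOfCardEq <| by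
    rw [Fintype.card_sum, Fintype.card_unit, ZMod.card]; omega
  exact exists_isEncoding_of_comap_equiv G e
    (exists_isEncoding_roundRobin _ (ZMod.isUnit_two_of_odd hm) zero_ne_one)

theorem exists_isEncoding_of_odd (ho : Odd (Fintype.card V)) {v w : V} (hne : v ≠ w)
    (hvw : ¬G.Adj v w) : ∃ φ, IsEncoding G (Fintype.card V - 1) φ := by
  classical
  set m := Fintype.card V - 2
  let T : Finset V := {v, w}
  have hcard : 2 ≤ Fintype.card V := by simpa [T, Finset.card_pair hne] using T.card_le_univ
  have hm : Odd m := by obtain ⟨j, hj⟩ := ho; exact ⟨j - 1, by omega⟩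
  have : NeZero m := ⟨hm.pos.ne'⟩
  let E : {x // x ∉ T} ≃ ZMod m := Fintype.equivOfCardEq <| by
    rw [Fintype.card_subtype_compl, Fintype.card_coe, ZMod.card, Finset.card_pair hne]
  let e : T ⊕ ZMod m ≃ V := (Equiv.sumCongr (Equiv.refl T) E.symm).trans (Equiv.sumCompl (· ∈ T))
  have hS : ∀ s : T, s = ⟨v, by simp [T]⟩ ∨ s = ⟨w, by simp [T]⟩ := fun ⟨s, hs⟩ => by
    simpa [T] using hs
  rw [show Fintype.card V - 1 = m + 1 by omega]
  exact exists_isEncoding_of_comap_equiv G e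
    (exists_isEncoding_roundRobin_pair _ (ZMod.isUnit_two_of_odd hm) hS (by simpa [e] using hvw))

theorem exists_isEncoding_le_card_sub_one (h3 : 3 ≤ Fintype.card V) :
    ∃ l ≤ Fintype.card V - 1, ∃ φ, IsEncoding G l φ := by
  rcases Nat.even_or_odd (Fintype.card V) with he | ho
  · exact ⟨_, le_rfl, exists_isEncoding_of_even G (by obtain ⟨j, hj⟩ := he; omega) he⟩
  · by_cases hG : ∀ x y, x ≠ y → G.Adj x y
    · exact ⟨1, by omega, exists_isEncoding_of_forall_adj G hG⟩
    · push Not at hG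
      obtain ⟨v, w, hne, hvw⟩ := hG
      exact ⟨_, le_rfl, exists_isEncoding_of_odd G ho hne hvw⟩

theorem exists_isEncoding_le_two (h : Fintype.card V ≤ 2) :
    ∃ l ≤ 2, ∃ φ, IsEncoding G l φ := by
  let f : V ↪ V ⊕ Fin (3 - Fintype.card V) := Function.Embedding.inl
  obtain ⟨l, hl, φ, hφ⟩ := exists_isEncoding_le_card_sub_one (G.map f) <| by
    rw [Fintype.card_sum, Fintype.card_fin]; omega
  rw [Fintype.card_sum, Fintype.card_fin] at hl
  exact ⟨l, by omega, _, SimpleGraph.comap_map_eq f G ▸ hφ.comap _ f⟩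

theorem pdim_le_max_two_card_sub_one : pdim G ≤ max 2 (Fintype.card V - 1) := by
  by_cases h3 : 3 ≤ Fintype.card V
  · obtain ⟨l, hl, _, hφ⟩ := exists_isEncoding_le_card_sub_one G h3
    exact (pdim_le_of_isEncoding G hφ).trans (le_max_of_le_right hl)
  · obtain ⟨l, hl, _, hφ⟩ := exists_isEncoding_le_two G (by omega)
    exact (pdim_le_of_isEncoding G hφ).trans (le_max_of_le_left hl)

end Bounds

/-- Every graph on at most `t + 3` vertices has product dimension at most
`t + 2`; in particular, any graph on `m ≥ 3` vertices has product dimension at most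
`m − 1`. -/
theorem pdim_small {V : Type*} [Fintype V] (G : SimpleGraph V) (t : ℕ)
    (h : Fintype.card V ≤ t + 3) :
    pdim G ≤ t + 2 ∧ (3 ≤ Fintype.card V → pdim G ≤ Fintype.card V - 1) := by
  have := pdim_le_max_two_card_sub_one G
  exact ⟨by omega, fun _ => by omega⟩
end

section
/- Let G be a k-degenerate graph (k ≥ 1) with degeneracy ordering v₁, …, v_n. Consider the random proper coloring where each vᵢ receives a color chosen uniformly at random from [3k] \ Cᵢ, where Cᵢ is the set of colors already used by the backward neighbors of vᵢ. Then for every non-adjacent pair {vᵢ, v_j}, the probability that vᵢ and v_j receive the same color is at least 1/(6k). -/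
open Finset
open scoped Classical

/-!
Condition on the colors of all vertices before `v_j` (with `i < j`). Given that prefix, `v_j`
receives any fixed color with probability at most `1/(2k)`, and any free color with probability
at least `1/(3k)`, because at least `2k` of the `3k` colors are free. The upper bound shows that
`v_i` shares its color with a given backward neighbor of `v_j` with probability at most `1/(2k)`;
as there are at most `k` such neighbors, the color of `v_i` is still free for `v_j` with
probability at least `1/2`, and on that event the lower bound gives `v_j` the color of `v_i`
with conditional probability at least `1/(3k)`.
-/

theorem sum_filter_exists_le_sum_sum {α ι : Type*} [Fintype α] (s : Finset ι)
    (P : ι → α → Prop) [∀ l, DecidablePred (P l)]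
    [DecidablePred fun a => ∃ l ∈ s, P l a] {w : α → ℝ} (hw : ∀ a, 0 ≤ w a) :
    ∑ a with ∃ l ∈ s, P l a, w a ≤ ∑ l ∈ s, ∑ a with P l a, w a := by
  have hterm : ∀ a,
      (if ∃ l ∈ s, P l a then w a else 0) ≤ ∑ l ∈ s, if P l a then w a else 0 := by
    intro a
    split_ifs with h
    · obtain ⟨l, hl, hP⟩ := h
      calc w a = if P l a then w a else 0 := by rw [if_pos hP]
        _ ≤ _ := single_le_sum (f := fun l => if P l a then w a else 0)
            (fun _ _ => by split_ifs <;> simp [hw]) hl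
    · exact sum_nonneg fun _ _ => by split_ifs <;> simp [hw]
  calc ∑ a with ∃ l ∈ s, P l a, w a
      = ∑ a, if ∃ l ∈ s, P l a then w a else 0 := sum_filter _ _
    _ ≤ ∑ a, ∑ l ∈ s, if P l a then w a else 0 := sum_le_sum fun a _ => hterm a
    _ = ∑ l ∈ s, ∑ a with P l a, w a := by rw [sum_comm]; simp_rw [sum_filter]

section Cylinder

variable {n : ℕ} {β : Type*} [Fintype β] [DecidableEq β]

def cylinder (m : Fin n) (p : Fin n → β) : Finset (Fin n → β) :=
  univ.filter fun c => ∀ l, l < m → c l = p l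

theorem eq_of_mem_cylinder {m l : Fin n} {p c : Fin n → β} (hc : c ∈ cylinder m p)
    (hl : l < m) : c l = p l :=
  (mem_filter.mp hc).2 l hl

theorem sum_le_sum_of_forall_cylinder (m : Fin n) {f g : (Fin n → β) → ℝ}
    (h : ∀ p, ∑ c ∈ cylinder m p, f c ≤ ∑ c ∈ cylinder m p, g c) :
    ∑ c, f c ≤ ∑ c, g c := by
  let restrict : (Fin n → β) → {l // l < m} → β := fun c l => c l
  rw [← sum_fiberwise univ restrict f, ← sum_fiberwise univ restrict g]
  refine sum_le_sum fun q _ => ?_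
  by_cases hq : ∃ p, restrict p = q
  · obtain ⟨p, rfl⟩ := hq
    have hfiber : univ.filter (fun c => restrict c = restrict p) = cylinder m p := by
      ext c
      simp [cylinder, restrict, funext_iff]
    rw [hfiber]
    exact h p
  · have hfiber : univ.filter (fun c => restrict c = q) = ∅ :=
      filter_false_of_mem fun c _ hc => hq ⟨c, hc⟩
    simp [hfiber]

end Cylinder

section Coloring

variable {n k : ℕ} (G : SimpleGraph (Fin n))

noncomputable def backwardNeighbors (i : Fin n) : Finset (Fin n) :=
  univ.filter fun j => j < i ∧ G.Adj j i

def IsUniformOnFreeColors (w : (Fin n → Fin (3 * k)) → ℝ) : Prop :=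
  ∀ (i : Fin n) (p : Fin n → Fin (3 * k)) (x : Fin (3 * k)),
    (x ∉ (backwardNeighbors G i).image p →
      (∑ c ∈ univ.filter (fun c => (∀ j, j < i → c j = p j) ∧ c i = x), w c) *
          ((3 * k - ((backwardNeighbors G i).image p).card : ℕ) : ℝ) =
        ∑ c ∈ cylinder i p, w c) ∧
    (x ∈ (backwardNeighbors G i).image p →
      ∑ c ∈ univ.filter (fun c => (∀ j, j < i → c j = p j) ∧ c i = x), w c = 0)

variable {G} {w : (Fin n → Fin (3 * k)) → ℝ}

theorem sum_cylinder_ite_eq (m : Fin n) (p : Fin n → Fin (3 * k)) (x : Fin (3 * k)) :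
    ∑ c ∈ cylinder m p, (if c m = x then w c else 0) =
      ∑ c ∈ univ.filter (fun c => (∀ j, j < m → c j = p j) ∧ c m = x), w c := by
  rw [← sum_filter, cylinder, filter_filter]

namespace IsUniformOnFreeColors

variable (hcond : IsUniformOnFreeColors G w) (hw0 : ∀ c, 0 ≤ w c)
include hcond hw0

theorem two_mul_sum_le (hdeg : ∀ i, (backwardNeighbors G i).card ≤ k)
    (m : Fin n) (p : Fin n → Fin (3 * k)) (x : Fin (3 * k)) :
    2 * k * ∑ c ∈ univ.filter (fun c => (∀ j, j < m → c j = p j) ∧ c m = x), w c ≤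
      ∑ c ∈ cylinder m p, w c := by
  by_cases hx : x ∈ (backwardNeighbors G m).image p
  · rw [(hcond m p x).2 hx, mul_zero]
    exact sum_nonneg fun c _ => hw0 c
  · rw [← (hcond m p x).1 hx, mul_comm]
    gcongr
    · exact sum_nonneg fun c _ => hw0 c
    · have hused := (card_image_le (s := backwardNeighbors G m) (f := p)).trans (hdeg m)
      exact_mod_cast (by omega : 2 * k ≤ 3 * k - ((backwardNeighbors G m).image p).card)

theorem sum_le_three_mul_sum (m : Fin n) (p : Fin n → Fin (3 * k)) (x : Fin (3 * k))
    (hx : x ∉ (backwardNeighbors G m).image p) :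
    ∑ c ∈ cylinder m p, w c ≤
      3 * k * ∑ c ∈ univ.filter (fun c => (∀ j, j < m → c j = p j) ∧ c m = x), w c := by
  rw [← (hcond m p x).1 hx, mul_comm]
  gcongr
  · exact sum_nonneg fun c _ => hw0 c
  · exact_mod_cast Nat.sub_le _ _

theorem two_mul_sum_eq_le (hdeg : ∀ i, (backwardNeighbors G i).card ≤ k)
    (hw1 : ∑ c, w c = 1) {a b : Fin n} (hab : a ≠ b) :
    2 * k * ∑ c with c a = c b, w c ≤ 1 := by
  wlog hba : b < a generalizing a b
  · have := this hab.symm (lt_of_le_of_ne (not_lt.mp hba) hab)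
    rwa [filter_congr fun c _ => eq_comm] at this
  rw [← hw1, sum_filter, mul_sum]
  refine sum_le_sum_of_forall_cylinder a fun p => ?_
  calc ∑ c ∈ cylinder a p, 2 * k * (if c a = c b then w c else 0)
      = 2 * k * ∑ c ∈ cylinder a p, (if c a = p b then w c else 0) := by
        rw [mul_sum]
        refine sum_congr rfl fun c hc => ?_
        rw [eq_of_mem_cylinder hc hba]
    _ ≤ ∑ c ∈ cylinder a p, w c := by
        rw [sum_cylinder_ite_eq]
        exact hcond.two_mul_sum_le hw0 hdeg a p (p b)

theorem two_mul_sum_mem_image_backwardNeighbors_le (hk : 1 ≤ k)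
    (hdeg : ∀ i, (backwardNeighbors G i).card ≤ k) (hw1 : ∑ c, w c = 1) {i j : Fin n}
    (hij : ¬G.Adj i j) :
    2 * ∑ c with c i ∈ (backwardNeighbors G j).image c, w c ≤ 1 := by
  have hpair : ∀ l ∈ backwardNeighbors G j, 2 * k * ∑ c with c l = c i, w c ≤ 1 := by
    intro l hl
    refine hcond.two_mul_sum_eq_le hw0 hdeg hw1 ?_
    rintro rfl
    exact hij (mem_filter.mp hl).2.2
  have hunion : 2 * k * ∑ c with c i ∈ (backwardNeighbors G j).image c, w c ≤ k :=
    calc 2 * k * ∑ c with c i ∈ (backwardNeighbors G j).image c, w c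
        ≤ 2 * k * ∑ l ∈ backwardNeighbors G j, ∑ c with c l = c i, w c := by
          rw [filter_congr fun c _ => mem_image]
          gcongr
          exact sum_filter_exists_le_sum_sum _ (fun l c => c l = c i) hw0
      _ ≤ ∑ l ∈ backwardNeighbors G j, 1 := by
          rw [mul_sum]
          exact sum_le_sum hpair
      _ ≤ k := by
          rw [sum_const, nsmul_one]
          exact_mod_cast hdeg j
  have hk_pos : (0 : ℝ) < k := by exact_mod_cast hk
  nlinarith

theorem sum_not_mem_image_backwardNeighbors_le {i j : Fin n} (hij : i < j) :
    ∑ c with c i ∉ (backwardNeighbors G j).image c, w c ≤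
      3 * k * ∑ c with c i = c j, w c := by
  rw [sum_filter, sum_filter, mul_sum]
  refine sum_le_sum_of_forall_cylinder j fun p => ?_
  have hcolors : ∀ c ∈ cylinder j p,
      (backwardNeighbors G j).image c = (backwardNeighbors G j).image p :=
    fun c hc => image_congr fun l hl => eq_of_mem_cylinder hc (mem_filter.mp hl).2.1
  calc ∑ c ∈ cylinder j p, (if c i ∉ (backwardNeighbors G j).image c then w c else 0)
      = ∑ c ∈ cylinder j p, (if p i ∉ (backwardNeighbors G j).image p then w c else 0) := by
        refine sum_congr rfl fun c hc => ?_
        rw [hcolors c hc, eq_of_mem_cylinder hc hij]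
    _ ≤ 3 * k * ∑ c ∈ cylinder j p, (if c j = p i then w c else 0) := by
        rw [sum_cylinder_ite_eq]
        by_cases hfree : p i ∈ (backwardNeighbors G j).image p
        · simp only [hfree, not_true_eq_false, if_false, sum_const_zero]
          exact mul_nonneg (by positivity) (sum_nonneg fun c _ => hw0 c)
        · simp only [hfree, not_false_eq_true, if_true]
          exact hcond.sum_le_three_mul_sum hw0 j p (p i) hfree
    _ = ∑ c ∈ cylinder j p, 3 * k * (if c i = c j then w c else 0) := by
        rw [mul_sum]
        refine sum_congr rfl fun c hc => ?_
        simp only [eq_of_mem_cylinder hc hij, eq_comm]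

end IsUniformOnFreeColors

end Coloring

/-- In the sequential random proper coloring of a `k`-degenerate graph with
`3k` colors (each vertex `vᵢ`, in the degeneracy order, receives a color uniformly at
random from `[3k] \ Cᵢ`, `Cᵢ` being the colors of its backward neighbors), any two fixed
non-adjacent vertices receive the same color with probability at least `1/(6k)`.

Vertices are identified with `Fin n` in degeneracy order; the distribution of the random
coloring is modelled by a probability weight `w` on colorings that satisfies the
conditional-uniformity property of the sequential procedure. -/
theorem same_color_probability {n k : ℕ} (hk : 1 ≤ k) (G : SimpleGraph (Fin n))
    (hdeg : ∀ i : Fin n, (Finset.univ.filter (fun j => j < i ∧ G.Adj j i)).card ≤ k)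
    (w : (Fin n → Fin (3 * k)) → ℝ)
    (hw0 : ∀ c, 0 ≤ w c) (hw1 : ∑ c, w c = 1)
    -- conditional uniformity: given any prefix, the color of `v i` is uniform on the
    -- colors not used by its backward neighbors
    (hcond : ∀ (i : Fin n) (p : Fin n → Fin (3 * k)) (x : Fin (3 * k)),
      (x ∉ ((Finset.univ.filter (fun j => j < i ∧ G.Adj j i)).image p) →
        (∑ c ∈ Finset.univ.filter
            (fun c : Fin n → Fin (3 * k) => (∀ j, j < i → c j = p j) ∧ c i = x), w c) *
          ((3 * k - ((Finset.univ.filter (fun j => j < i ∧ G.Adj j i)).image p).card : ℕ) : ℝ)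
        = ∑ c ∈ Finset.univ.filter
            (fun c : Fin n → Fin (3 * k) => ∀ j, j < i → c j = p j), w c) ∧
      (x ∈ ((Finset.univ.filter (fun j => j < i ∧ G.Adj j i)).image p) →
        (∑ c ∈ Finset.univ.filter
            (fun c : Fin n → Fin (3 * k) => (∀ j, j < i → c j = p j) ∧ c i = x), w c) = 0)) :
    ∀ i j : Fin n, i ≠ j → ¬ G.Adj i j →
      1 / (6 * k : ℝ) ≤
        ∑ c ∈ Finset.univ.filter (fun c : Fin n → Fin (3 * k) => c i = c j), w c := by
  have hunif : IsUniformOnFreeColors G w := hcond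
  intro i j hne hadj
  wlog hij : i < j generalizing i j
  · have := this j i hne.symm (fun h => hadj h.symm) (lt_of_le_of_ne (not_lt.mp hij) hne.symm)
    rwa [filter_congr fun c _ => eq_comm] at this
  have hcollision := hunif.two_mul_sum_mem_image_backwardNeighbors_le hw0 hk hdeg hw1 hadj
  have hfree := hunif.sum_not_mem_image_backwardNeighbors_le hw0 hij
  have hsplit := sum_filter_add_sum_filter_not univ
    (fun c => c i ∈ (backwardNeighbors G j).image c) w
  rw [div_le_iff₀ (by positivity)]
  linarith
end
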